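/- arXiv:2412.11738 — 8 statements merged into one kernel-verified Lean document; each statement's English description precedes it below -/
import Mathlib

section
/- Let f ∈ ℚ⟦x⟧ be a formal power series in one indeterminate that is algebraic over ℚ[x] (i.e., there exists a nonzero polynomial P(x,y) ∈ ℚ[x,y] with P(x,f)=0). Then there exists a positive integer a such that a·f(a·x) ∈ ℤ⟦x⟧. -/
/-!
Choose `P` with `P(f) = 0` and `P'(f) ≠ 0`, and let `r` be the `X`-adic order of `P'(f)`.
Write `f = s + X^(r+1) g` with `s` a polynomial and `X ∣ g`. Expanding `P` around `s`, every
coefficient of `y ↦ P(s + X^(r+1) y)` is divisible by `X^(2r+1)`, and after this division only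
the linear coefficient survives modulo `X`, where it is the leading coefficient `c ≠ 0` of
`P'(f)`. Hence `g = X·Q(g)` for some `Q ∈ ℚ[x][y]`. If `a` clears the denominators of `Q`, the
series `g(ax)` is again a fixed point of `y ↦ X·Q̃(y)`, now with `Q̃ ∈ ℤ[x][y]`, and fixed points
of such maps have integer coefficients, since iterating the map from `0` approximates them
`X`-adically. Finally `a·f(ax)` is integral once `a` also clears the denominators of `s`.
-/

open scoped Polynomial PowerSeries

namespace PowerSeries

variable {A B : Type*} [CommRing A] [CommRing B] (φ : A →+* B)

theorem X_pow_dvd_coe_iff {n : ℕ} {p : B[X]} :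
    (X : B⟦X⟧) ^ n ∣ (p : B⟦X⟧) ↔ Polynomial.X ^ n ∣ p := by
  simp [X_pow_dvd_iff, Polynomial.X_pow_dvd_iff, Polynomial.coeff_coe]

theorem X_pow_dvd_sub_trunc (n : ℕ) (f : B⟦X⟧) : X ^ n ∣ f - (trunc n f : B⟦X⟧) := by
  rw [X_pow_dvd_iff]
  intro d hd
  simp [coeff_trunc, hd]

theorem mem_range_map_iff {G : B⟦X⟧} : G ∈ (map φ).range ↔ ∀ n, coeff n G ∈ φ.range := by
  refine ⟨?_, fun h => ?_⟩
  · rintro ⟨g, rfl⟩ n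
    exact ⟨coeff n g, (coeff_map φ n g).symm⟩
  · choose g hg using h
    exact ⟨mk g, ext fun n => by rw [coeff_map, coeff_mk, hg]⟩

theorem X_mem_range_map : (X : B⟦X⟧) ∈ (map φ).range := ⟨X, map_X φ⟩

theorem C_mem_range_map (a : A) : C (φ a) ∈ (map φ).range := ⟨C a, map_C φ a⟩

theorem eval_mem_range_map {Q : B⟦X⟧[X]} (hQ : ∀ j, Q.coeff j ∈ (map φ).range) {H : B⟦X⟧}
    (hH : H ∈ (map φ).range) : Q.eval H ∈ (map φ).range := by
  rw [Polynomial.eval_eq_sum_range]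
  exact Subring.sum_mem _ fun j _ => Subring.mul_mem _ (hQ j) (Subring.pow_mem _ hH j)

theorem mem_range_map_of_eq_X_mul_eval {Q : B⟦X⟧[X]} (hQ : ∀ j, Q.coeff j ∈ (map φ).range)
    {G : B⟦X⟧} (hG : G = X * Q.eval G) : G ∈ (map φ).range := by
  have approx : ∀ n, ∃ H ∈ (map φ).range, X ^ n ∣ G - H := by
    intro n
    induction n with
    | zero => exact ⟨0, Subring.zero_mem _, by simp⟩
    | succ n ih =>
      obtain ⟨H, hH, hGH⟩ := ih
      refine ⟨X * Q.eval H,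
        Subring.mul_mem _ (X_mem_range_map φ) (eval_mem_range_map φ hQ hH), ?_⟩
      rw [hG, ← mul_sub, pow_succ']
      exact mul_dvd_mul_left X (hGH.trans (Polynomial.sub_dvd_eval_sub G H Q))
  rw [mem_range_map_iff]
  intro n
  obtain ⟨H, hH, hGH⟩ := approx (n + 1)
  have hcoeff : coeff n (G - H) = 0 := X_pow_dvd_iff.mp hGH n n.lt_succ_self
  rw [map_sub, sub_eq_zero] at hcoeff
  exact hcoeff ▸ (mem_range_map_iff φ).mp hH n

theorem C_mul_rescale_coe_mem_range_map {a : A} {p : B[X]}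
    (hp : ∀ i, φ a * p.coeff i ∈ φ.range) :
    C (φ a) * rescale (φ a) (p : B⟦X⟧) ∈ (map φ).range := by
  rw [mem_range_map_iff]
  intro n
  rw [coeff_C_mul, coeff_rescale, Polynomial.coeff_coe, mul_left_comm]
  exact Subring.mul_mem _ (Subring.pow_mem _ (RingHom.mem_range_self φ a) n) (hp n)

theorem rescale_mem_range_map_of_eq_X_mul_eval {a : A} {Q : B[X][X]}
    (hQ : ∀ j i, φ a * (Q.coeff j).coeff i ∈ φ.range) {g : B⟦X⟧}
    (hg : g = X * (Q.map Polynomial.coeToPowerSeries.ringHom).eval g) :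
    rescale (φ a) g ∈ (map φ).range := by
  set ρ := rescale (φ a)
  refine mem_range_map_of_eq_X_mul_eval φ
    (Q := Polynomial.C (C (φ a)) * Q.map (ρ.comp Polynomial.coeToPowerSeries.ringHom))
    (fun j => ?_) ?_
  · rw [Polynomial.coeff_C_mul, Polynomial.coeff_map]
    exact C_mul_rescale_coe_mem_range_map φ (hQ j)
  · conv_lhs => rw [hg]
    rw [map_mul, rescale_X, Polynomial.eval_C_mul, Polynomial.eval_map, Polynomial.eval_map,
      Polynomial.hom_eval₂]
    ring

theorem smul_rescale_coe_add_X_pow_mul_mem_range_map {a : A} {p : B[X]} {g : B⟦X⟧} (n : ℕ)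
    (hp : ∀ i, φ a * p.coeff i ∈ φ.range) (hg : rescale (φ a) g ∈ (map φ).range) :
    φ a • rescale (φ a) ((p : B⟦X⟧) + X ^ n * g) ∈ (map φ).range := by
  rw [smul_eq_C_mul, map_add, map_mul, map_pow, rescale_X, mul_add]
  exact Subring.add_mem _ (C_mul_rescale_coe_mem_range_map φ hp) <|
    Subring.mul_mem _ (C_mem_range_map φ a) <| Subring.mul_mem _
      (Subring.pow_mem _ (Subring.mul_mem _ (C_mem_range_map φ a) (X_mem_range_map φ)) n) hg

end PowerSeries

namespace Polynomial

variable {R : Type*} [CommRing R]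

theorem exists_eval_map_eq_zero_and_derivative_ne_zero [IsAddTorsionFree R] {S : Type*}
    [CommRing S] {φ : R →+* S} (hφ : Function.Injective φ) {x : S} {P : R[X]} (hP : P ≠ 0)
    (hPx : (P.map φ).eval x = 0) :
    ∃ Q : R[X], (Q.map φ).eval x = 0 ∧ (Q.derivative.map φ).eval x ≠ 0 := by
  induction hn : P.natDegree using Nat.strong_induction_on generalizing P with
  | _ n ih =>
  by_cases hP' : (P.derivative.map φ).eval x = 0
  · have hdeg : P.natDegree ≠ 0 := by
      intro h0
      rw [eq_C_of_natDegree_eq_zero h0, Polynomial.map_C, eval_C, map_eq_zero_iff φ hφ] at hPx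
      exact hP (eq_C_of_natDegree_eq_zero h0 ▸ hPx ▸ C_0)
    exact ih _ (hn ▸ natDegree_derivative_lt hdeg) (derivative_ne_zero.mpr hdeg) hP' rfl
  · exact ⟨P, hPx, hP'⟩

theorem pow_dvd_derivative_eval_sub {P : R[X]} {π f s v c : R} {r : ℕ}
    (hfs : π ^ (r + 1) ∣ f - s) (hf : P.derivative.eval f = π ^ r * v) (hv : π ∣ v - c) :
    π ^ (r + 1) ∣ P.derivative.eval s - c * π ^ r := by
  have hsf : π ^ (r + 1) ∣ P.derivative.eval s - P.derivative.eval f :=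
    (dvd_sub_comm.mp hfs).trans (sub_dvd_eval_sub s f _)
  have hvc : π ^ (r + 1) ∣ π ^ r * (v - c) := pow_succ π r ▸ mul_dvd_mul_left _ hv
  have := dvd_add hsf hvc
  rwa [hf, show P.derivative.eval s - π ^ r * v + π ^ r * (v - c)
    = P.derivative.eval s - c * π ^ r by ring] at this

theorem pow_dvd_eval_of_eval_eq_zero {P : R[X]} {π f s : R} {r : ℕ}
    (hfs : π ^ (r + 2) ∣ f - s) (hf : P.eval f = 0) (hs : π ^ r ∣ P.derivative.eval s) :
    π ^ (2 * r + 2) ∣ P.eval s := by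
  obtain ⟨k, hk⟩ := binomExpansion P s (f - s)
  rw [add_sub_cancel, hf] at hk
  have hlin : π ^ (2 * r + 2) ∣ P.derivative.eval s * (f - s) := by
    rw [show 2 * r + 2 = r + (r + 2) by ring, pow_add]
    exact mul_dvd_mul hs hfs
  have hsq : π ^ (2 * r + 2) ∣ k * (f - s) ^ 2 := by
    refine Dvd.dvd.mul_left ((pow_dvd_pow π (by omega : 2 * r + 2 ≤ (r + 2) * 2)).trans ?_) k
    rw [pow_mul]
    exact pow_dvd_pow_of_dvd hfs 2
  rw [show P.eval s = -(P.derivative.eval s * (f - s) + k * (f - s) ^ 2) by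
    linear_combination -hk]
  exact (dvd_add hlin hsq).neg_right

theorem exists_taylor_comp_eq {P : R[X]} {π c s : R} {r : ℕ}
    (h0 : π ^ (2 * r + 2) ∣ P.eval s) (h1 : π ^ (r + 1) ∣ P.derivative.eval s - c * π ^ r) :
    ∃ S : R[X],
      (taylor s P).comp (C (π ^ (r + 1)) * X) = C (π ^ (2 * r + 1)) * (C c * X + C π * S) := by
  have hcoeff : ∀ i, π ^ (2 * r + 2) ∣
      ((taylor s P).comp (C (π ^ (r + 1)) * X) - C (c * π ^ (2 * r + 1)) * X).coeff i := by
    intro i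
    rw [coeff_sub, comp_C_mul_X_coeff, coeff_C_mul_X]
    rcases i with _ | _ | i
    · simpa using h0
    · rw [taylor_coeff_one, if_pos rfl,
        show P.derivative.eval s * (π ^ (r + 1)) ^ 1 - c * π ^ (2 * r + 1)
          = π ^ (r + 1) * (P.derivative.eval s - c * π ^ r) by ring,
        show 2 * r + 2 = (r + 1) + (r + 1) by ring, pow_add]
      exact mul_dvd_mul_left _ h1
    · rw [if_neg (by omega), sub_zero, ← pow_mul]
      exact Dvd.dvd.mul_left (pow_dvd_pow π (by nlinarith)) _
  obtain ⟨S, hS⟩ := (C_dvd_iff_dvd_coeff _ _).mpr hcoeff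
  refine ⟨S, ?_⟩
  rw [← sub_add_cancel ((taylor s P).comp _) (C (c * π ^ (2 * r + 1)) * X), hS]
  simp only [C_mul, C_pow]
  ring

theorem eval_map_taylor_comp {S : Type*} [CommRing S] (φ : R →+* S) (P : R[X]) (s m : R)
    (g : S) : (((taylor s P).comp (C m * X)).map φ).eval g = (P.map φ).eval (φ m * g + φ s) := by
  simp [taylor_apply, comp_assoc, Polynomial.map_comp]

theorem exists_taylor_comp_eq_of_eval_eq_zero {P : R[X][X]} {f v : R⟦X⟧} {s : R[X]} {r : ℕ}
    (hfs : PowerSeries.X ^ (r + 2) ∣ f - (s : R⟦X⟧))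
    (hf : (P.map coeToPowerSeries.ringHom).eval f = 0)
    (hf' : (P.derivative.map coeToPowerSeries.ringHom).eval f = PowerSeries.X ^ r * v) :
    ∃ S : R[X][X], (taylor s P).comp (C (X ^ (r + 1)) * X) =
      C (X ^ (2 * r + 1)) * (C (C (PowerSeries.constantCoeff v)) * X + C X * S) := by
  set ι : R[X] →+* R⟦X⟧ := coeToPowerSeries.ringHom
  set c := PowerSeries.constantCoeff v
  have hι : ∀ p : R[X][X], ((p.eval s : R[X]) : R⟦X⟧) = (p.map ι).eval (s : R⟦X⟧) :=
    fun p => by rw [eval_map]; exact (eval₂_hom ι s).symm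
  have h1 : X ^ (r + 1) ∣ P.derivative.eval s - C c * X ^ r := by
    have := pow_dvd_derivative_eval_sub (P := P.map ι) (r := r) (v := v) (c := PowerSeries.C c)
      ((pow_dvd_pow _ (by omega)).trans hfs) (by rwa [derivative_map])
      (by rw [PowerSeries.X_dvd_iff]; simp [c])
    rw [← PowerSeries.X_pow_dvd_coe_iff]
    convert this using 1
    rw [derivative_map, ← hι]
    simp
  have h0 : X ^ (2 * r + 2) ∣ P.eval s := by
    have hs : X ^ r ∣ P.derivative.eval s := by
      have := dvd_add ((pow_dvd_pow X r.le_succ).trans h1) (dvd_mul_left (X ^ r) (C c))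
      rwa [sub_add_cancel] at this
    rw [← PowerSeries.X_pow_dvd_coe_iff, hι] at hs ⊢
    rw [← derivative_map] at hs
    exact pow_dvd_eval_of_eval_eq_zero hfs hf hs
  exact exists_taylor_comp_eq h0 h1

end Polynomial

open Polynomial in
theorem exists_eq_add_X_pow_mul_and_eq_X_mul_eval {K : Type*} [Field K] {P : K[X][X]}
    {f : K⟦X⟧} (hf : (P.map coeToPowerSeries.ringHom).eval f = 0)
    (hf' : (P.derivative.map coeToPowerSeries.ringHom).eval f ≠ 0) :
    ∃ (s : K[X]) (r : ℕ) (g : K⟦X⟧) (Q : K[X][X]), f = (s : K⟦X⟧) + PowerSeries.X ^ (r + 1) * g ∧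
      g = PowerSeries.X * (Q.map coeToPowerSeries.ringHom).eval g := by
  set u := (P.derivative.map coeToPowerSeries.ringHom).eval f
  set r := u.order.toNat
  set c := PowerSeries.constantCoeff u.divXPowOrder
  have hc : c ≠ 0 := PowerSeries.constantCoeff_divXPowOrder_eq_zero_iff.not.mpr hf'
  set s := PowerSeries.trunc (r + 2) f
  obtain ⟨h, hh⟩ := PowerSeries.X_pow_dvd_sub_trunc (r + 2) f
  obtain ⟨S, hS⟩ := exists_taylor_comp_eq_of_eval_eq_zero ⟨h, hh⟩ hf
    PowerSeries.X_pow_order_mul_divXPowOrder.symm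
  refine ⟨s, r, PowerSeries.X * h, C (C (-c⁻¹)) * S, by linear_combination hh, ?_⟩
  have hR := eval_map_taylor_comp coeToPowerSeries.ringHom P s (X ^ (r + 1)) (PowerSeries.X * h)
  rw [hS, show coeToPowerSeries.ringHom (X ^ (r + 1)) * (PowerSeries.X * h)
    + coeToPowerSeries.ringHom s = f by simp; linear_combination -hh, hf] at hR
  -- `simp` cancels the nonzero factor `X ^ (2 * r + 1)`
  simp at hR
  have hcc : PowerSeries.C c⁻¹ * PowerSeries.C c = 1 := by
    rw [← map_mul, inv_mul_cancel₀ hc, map_one]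
  simp
  linear_combination PowerSeries.C c⁻¹ * hR - PowerSeries.X * h * hcc

theorem Rat.exists_nat_mul_mem_range_intCast (s : Finset ℚ) :
    ∃ a : ℕ, 0 < a ∧ ∀ q ∈ s, (a : ℚ) * q ∈ (Int.castRingHom ℚ).range := by
  refine ⟨∏ q ∈ s, q.den, Finset.prod_pos fun q _ => q.den_pos, fun q hq => ?_⟩
  obtain ⟨k, hk⟩ := Finset.dvd_prod_of_mem Rat.den hq
  refine ⟨k * q.num, ?_⟩
  rw [eq_intCast, hk]
  push_cast
  rw [← Rat.mul_den_eq_num]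
  ring

theorem Polynomial.exists_nat_mul_coeff_mem_range_intCast (ps : Finset ℚ[X]) :
    ∃ a : ℕ, 0 < a ∧ ∀ p ∈ ps, ∀ i, (a : ℚ) * p.coeff i ∈ (Int.castRingHom ℚ).range := by
  obtain ⟨a, ha, hden⟩ := Rat.exists_nat_mul_mem_range_intCast (ps.biUnion coeffs)
  refine ⟨a, ha, fun p hp i => ?_⟩
  by_cases hi : p.coeff i = 0
  · simp [hi]
  · exact hden _ (Finset.mem_biUnion.mpr ⟨p, hp, coeff_mem_coeffs hi⟩)

open Polynomial in
/-- **Eisenstein's Theorem.** If `f ∈ ℚ⟦x⟧` is algebraic over `ℚ[x]`, then there is a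
positive integer `a` such that `a·f(a·x)` has integer coefficients. -/
theorem eisenstein_thm
    (f : PowerSeries ℚ)
    (halg : ∃ P : Polynomial (Polynomial ℚ), P ≠ 0 ∧
      Polynomial.eval f (P.map (Polynomial.coeToPowerSeries.algHom ℚ).toRingHom) = 0) :
    ∃ a : ℕ, 0 < a ∧ ∃ g : PowerSeries ℤ,
      PowerSeries.map (Int.castRingHom ℚ) g = (a : ℚ) • PowerSeries.rescale (a : ℚ) f := by
  obtain ⟨P₀, hP₀, hP₀f⟩ := halg
  have hι : (coeToPowerSeries.algHom ℚ).toRingHom = coeToPowerSeries.ringHom (R := ℚ) :=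
    RingHom.ext fun p => by simp [coeToPowerSeries.algHom_apply]
  rw [hι] at hP₀f
  obtain ⟨P, hf, hf'⟩ :=
    exists_eval_map_eq_zero_and_derivative_ne_zero (coe_injective ℚ) hP₀ hP₀f
  obtain ⟨s, r, g, Q, rfl, hg⟩ := exists_eq_add_X_pow_mul_and_eq_X_mul_eval hf hf'
  obtain ⟨a, ha, hden⟩ := exists_nat_mul_coeff_mem_range_intCast (insert s Q.coeffs)
  have hQ : ∀ j i, (a : ℚ) * (Q.coeff j).coeff i ∈ (Int.castRingHom ℚ).range := fun j i => by
    by_cases hj : Q.coeff j = 0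
    · simp [hj]
    · exact hden _ (Finset.mem_insert_of_mem (coeff_mem_coeffs hj)) i
  have hg' := PowerSeries.rescale_mem_range_map_of_eq_X_mul_eval (Int.castRingHom ℚ) (a := a)
    (by simpa using hQ) hg
  refine ⟨a, ha, ?_⟩
  simpa using PowerSeries.smul_rescale_coe_add_X_pow_mul_mem_range_map (Int.castRingHom ℚ)
    (a := a) (r + 1) (by simpa using hden s (Finset.mem_insert_self _ _)) (by simpa using hg')
end

section
/- Let f = Σ fₗ xˡ ∈ ℚ⟦x⟧ be algebraic over ℚ[x]. Then there exists a positive integer a such that for all ℓ ∈ ℕ, a^{ℓ+1}·fₗ ∈ ℤ. -/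
/-!
Replace the annihilating polynomial by one with `P(f) = 0 ≠ P'(f)` (possible in characteristic
zero) and let `h` be the order of `P'(f)`. Write `f = s + X^N g` with `N = h + 2` and `s` the
truncation of `f` below `N`, and expand `P` around `s`: `∑ₖ Qₖ (X^N g)^k = 0` with `Qₖ` the Taylor
coefficients. Since `Q₁ = P'(s) ≡ P'(f) mod X^N`, the coefficient of `X^(N+h+n)` in this identity
is `c gₙ` (with `c ≠ 0` the leading coefficient of `P'(f)`) plus products of coefficients of the
`Qₖ` with coefficients of `g^k` of low enough degree, so that `a^(n+1) gₙ ∈ ℤ` follows by strong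
induction once `a` clears the denominators of `s` and of the finitely many coefficients of the
`Qₖ / c`.
-/

open PowerSeries Finset.HasAntidiagonal
open scoped Polynomial

theorem Polynomial.exists_eval₂_eq_zero_and_eval₂_derivative_ne_zero {R A : Type*}
    [CommSemiring R] [IsAddTorsionFree R] [CommSemiring A] {φ : R →+* A}
    (hφ : Function.Injective φ) {f : A} {P : R[X]} (hP : P ≠ 0) (hPf : P.eval₂ φ f = 0) :
    ∃ Q : R[X], Q.eval₂ φ f = 0 ∧ (derivative Q).eval₂ φ f ≠ 0 := by
  induction hn : P.natDegree using Nat.strong_induction_on generalizing P with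
  | _ n ih =>
  by_cases hP' : (derivative P).eval₂ φ f = 0
  · have hdeg : P.natDegree ≠ 0 := by
      intro h0
      rw [eq_C_of_natDegree_eq_zero h0, eval₂_C, map_eq_zero_iff φ hφ] at hPf
      exact hP (by rw [eq_C_of_natDegree_eq_zero h0, hPf, C_0])
    exact ih _ (hn ▸ natDegree_derivative_lt hdeg) (derivative_ne_zero.mpr hdeg) hP' rfl
  · exact ⟨P, hPf, hP'⟩

namespace PowerSeries

variable {R : Type*} [CommRing R] {S : Subring R} {a : R}

def IsEisensteinConstant (S : Subring R) (a : R) (g : R⟦X⟧) : Prop :=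
  ∀ n, a ^ (n + 1) * coeff n g ∈ S

namespace IsEisensteinConstant

theorem of_forall_mul_coeff_mem (ha : a ∈ S) {g : R⟦X⟧} (hg : ∀ j, a * coeff j g ∈ S) :
    IsEisensteinConstant S a g := fun n => by
  rw [pow_succ, mul_assoc]
  exact S.mul_mem (S.pow_mem ha n) (hg n)

theorem add {g₁ g₂ : R⟦X⟧} (h₁ : IsEisensteinConstant S a g₁)
    (h₂ : IsEisensteinConstant S a g₂) :
    IsEisensteinConstant S a (g₁ + g₂) := fun n => by
  rw [map_add, mul_add]
  exact S.add_mem (h₁ n) (h₂ n)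

theorem X_pow_mul (ha : a ∈ S) {g : R⟦X⟧} (hg : IsEisensteinConstant S a g) (N : ℕ) :
    IsEisensteinConstant S a (X ^ N * g) := fun n => by
  rw [coeff_X_pow_mul']
  split_ifs with hN
  · rw [show n + 1 = N + (n - N + 1) by omega, pow_add, mul_assoc]
    exact S.mul_mem (S.pow_mem ha N) (hg _)
  · rw [mul_zero]
    exact S.zero_mem

end IsEisensteinConstant

variable {g : R⟦X⟧} {n : ℕ}

theorem pow_add_mul_coeff_pow_mem (ha : a ∈ S) (hg : ∀ m < n, a ^ (m + 1) * coeff m g ∈ S) :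
    ∀ k u, u + k ≤ n → a ^ (u + k) * coeff u (g ^ k) ∈ S := by
  intro k
  induction k with
  | zero =>
    intro u _
    rw [pow_zero, coeff_one]
    split_ifs
    · exact S.mul_mem (S.pow_mem ha u) S.one_mem
    · rw [mul_zero]
      exact S.zero_mem
  | succ k ih =>
    intro u hu
    rw [pow_succ', coeff_mul, Finset.mul_sum]
    refine S.sum_mem fun pq hpq => ?_
    rw [mem_antidiagonal] at hpq
    have split : a ^ (u + (k + 1)) * (coeff pq.1 g * coeff pq.2 (g ^ k)) =
        (a ^ (pq.1 + 1) * coeff pq.1 g) * (a ^ (pq.2 + k) * coeff pq.2 (g ^ k)) := by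
      rw [← hpq]
      ring
    rw [split]
    exact S.mul_mem (hg _ (by omega)) (ih _ (by omega))

theorem pow_succ_mul_coeff_mul_X_pow_mul_pow_mem (ha : a ∈ S) {E : R⟦X⟧}
    (hE : ∀ j, a * coeff j E ∈ S) (hg : ∀ m < n, a ^ (m + 1) * coeff m g ∈ S) {h N k : ℕ}
    (hN : h + 2 ≤ N) (hk : 2 ≤ k) :
    a ^ (n + 1) * coeff (N + h + n) (E * (X ^ N * g) ^ k) ∈ S := by
  rw [mul_pow, ← pow_mul, coeff_mul, Finset.mul_sum]
  refine S.sum_mem fun pq hpq => ?_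
  rw [mem_antidiagonal] at hpq
  rw [coeff_X_pow_mul']
  split_ifs with hq
  · have hlt : pq.2 - N * k + k ≤ n := by
      have : N + h + k ≤ N * k := by nlinarith
      omega
    have split : a ^ (n + 1) * (coeff pq.1 E * coeff (pq.2 - N * k) (g ^ k)) =
        (a * coeff pq.1 E) * a ^ (n - (pq.2 - N * k + k)) *
          (a ^ (pq.2 - N * k + k) * coeff (pq.2 - N * k) (g ^ k)) := by
      rw [show n + 1 = 1 + (n - (pq.2 - N * k + k)) + (pq.2 - N * k + k) by omega, pow_add,
        pow_add]
      ring
    rw [split]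
    exact S.mul_mem (S.mul_mem (hE _) (S.pow_mem ha _)) (pow_add_mul_coeff_pow_mem ha hg _ _ hlt)
  · rw [mul_zero, mul_zero]
    exact S.zero_mem

theorem pow_succ_mul_coeff_mul_sub_coeff_mem (ha : a ∈ S) {E : R⟦X⟧}
    (hE : ∀ j, a * coeff j E ∈ S) {h : ℕ} (hE_lt : ∀ j < h, coeff j E = 0) (hE_eq : coeff h E = 1)
    (hg : ∀ m < n, a ^ (m + 1) * coeff m g ∈ S) :
    a ^ (n + 1) * (coeff (h + n) (E * g) - coeff n g) ∈ S := by
  have hmem : (h, n) ∈ antidiagonal (h + n) := mem_antidiagonal.2 rfl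
  rw [coeff_mul, ← Finset.add_sum_erase _ _ hmem, hE_eq, one_mul, add_sub_cancel_left,
    Finset.mul_sum]
  refine S.sum_mem fun pq hpq => ?_
  rw [Finset.mem_erase, mem_antidiagonal] at hpq
  obtain ⟨hne, hpq⟩ := hpq
  rcases lt_or_ge pq.1 h with hp | hp
  · rw [hE_lt _ hp, zero_mul, mul_zero]
    exact S.zero_mem
  · have hq : pq.2 < n := by
      rcases pq with ⟨p, q⟩
      simp only [ne_eq, Prod.mk.injEq] at hne hp hpq ⊢
      omega
    have split : a ^ (n + 1) * (coeff pq.1 E * coeff pq.2 g) =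
        (a * coeff pq.1 E) * a ^ (n - pq.2 - 1) * (a ^ (pq.2 + 1) * coeff pq.2 g) := by
      rw [show n + 1 = 1 + (n - pq.2 - 1) + (pq.2 + 1) by omega, pow_add, pow_add]
      ring
    rw [split]
    exact S.mul_mem (S.mul_mem (hE _) (S.pow_mem ha _)) (hg _ hq)

theorem IsEisensteinConstant.of_eval_X_pow_mul_eq_zero (ha : a ∈ S) {Q : R⟦X⟧[X]} {h N : ℕ}
    (hN : h + 2 ≤ N) (hQ : ∀ k j, a * coeff j (Q.coeff k) ∈ S)
    (hQ_lt : ∀ j < h, coeff j (Q.coeff 1) = 0) (hQ_eq : coeff h (Q.coeff 1) = 1)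
    (hg : Q.eval (X ^ N * g) = 0) : IsEisensteinConstant S a g := by
  intro n
  induction n using Nat.strong_induction_on with
  | _ n ih =>
  have hsum : coeff (N + h + n) (Q.coeff 1 * (X ^ N * g)) +
      ∑ k ∈ (Q.erase 1).support, coeff (N + h + n) (Q.coeff k * (X ^ N * g) ^ k) = 0 := by
    have hsplit := congrArg (Polynomial.eval (X ^ N * g)) (Q.monomial_add_erase 1)
    rw [Polynomial.eval_add, Polynomial.eval_monomial, pow_one, hg, Polynomial.eval_eq_sum,
      Polynomial.sum_def] at hsplit
    rw [← map_sum, ← map_add, ← map_zero (coeff (N + h + n)), ← hsplit]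
    congr 2
    refine Finset.sum_congr rfl fun k hk => ?_
    rw [Polynomial.coeff_erase, if_neg (Finset.ne_of_mem_erase (Q.support_erase 1 ▸ hk))]
  have hterm : coeff (N + h + n) (Q.coeff 1 * (X ^ N * g)) = coeff (h + n) (Q.coeff 1 * g) := by
    rw [mul_left_comm, coeff_X_pow_mul', if_pos (by omega), show N + h + n - N = h + n by omega]
  have hrest : ∀ k ∈ (Q.erase 1).support,
      a ^ (n + 1) * coeff (N + h + n) (Q.coeff k * (X ^ N * g) ^ k) ∈ S := by
    intro k hk
    have hk1 : k ≠ 1 := Finset.ne_of_mem_erase (Polynomial.support_erase Q 1 ▸ hk)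
    rcases Nat.lt_or_ge k 2 with hk2 | hk2
    · obtain rfl : k = 0 := by omega
      rw [pow_zero, mul_one, pow_succ, mul_assoc]
      exact S.mul_mem (S.pow_mem ha n) (hQ 0 _)
    · exact pow_succ_mul_coeff_mul_X_pow_mul_pow_mem ha (hQ k) ih hN hk2
  have hsolve : a ^ (n + 1) * coeff n g =
      -(a ^ (n + 1) * (coeff (h + n) (Q.coeff 1 * g) - coeff n g)) -
        ∑ k ∈ (Q.erase 1).support,
          a ^ (n + 1) * coeff (N + h + n) (Q.coeff k * (X ^ N * g) ^ k) := by
    rw [← Finset.mul_sum, ← hterm]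
    linear_combination a ^ (n + 1) * hsum
  rw [hsolve]
  exact S.sub_mem (S.neg_mem (pow_succ_mul_coeff_mul_sub_coeff_mem ha (hQ 1) hQ_lt hQ_eq ih))
    (S.sum_mem hrest)

theorem coeff_eval_eq_of_X_pow_dvd_sub (p : R⟦X⟧[X]) {r₁ r₂ : R⟦X⟧} {N : ℕ}
    (hr : X ^ N ∣ r₁ - r₂) {j : ℕ} (hj : j < N) :
    coeff j (p.eval r₁) = coeff j (p.eval r₂) := by
  have hdvd := X_pow_dvd_iff.mp (hr.trans (Polynomial.sub_dvd_eval_sub r₁ r₂ p)) j hj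
  rwa [map_sub, sub_eq_zero] at hdvd

theorem IsEisensteinConstant.of_eval_eq_zero {K : Type*} [Field K] {S : Subring K} {a : K}
    (ha : a ∈ S) {P : K⟦X⟧[X]} {f g s : K⟦X⟧} {h : ℕ} {c : K} (hc : c ≠ 0)
    (hfg : f = X ^ (h + 2) * g + s) (hPf : P.eval f = 0)
    (hP'_lt : ∀ j < h, coeff j ((Polynomial.derivative P).eval f) = 0)
    (hP'_eq : coeff h ((Polynomial.derivative P).eval f) = c)
    (hs : ∀ j, a * coeff j s ∈ S)
    (htaylor : ∀ k j, a * (c⁻¹ * coeff j ((Polynomial.taylor s P).coeff k)) ∈ S) :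
    IsEisensteinConstant S a f := by
  set Q := Polynomial.C (C c⁻¹) * Polynomial.taylor s P
  have hsf : X ^ (h + 2) ∣ s - f := ⟨-g, by rw [hfg]; ring⟩
  have hQ₁ : ∀ j < h + 2,
      coeff j (Q.coeff 1) = c⁻¹ * coeff j ((Polynomial.derivative P).eval f) := by
    intro j hj
    rw [Polynomial.coeff_C_mul, Polynomial.taylor_coeff_one, coeff_C_mul,
      coeff_eval_eq_of_X_pow_dvd_sub _ hsf hj]
  have hg : IsEisensteinConstant S a g := .of_eval_X_pow_mul_eq_zero (Q := Q) (h := h) ha le_rfl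
    (fun k j => by rw [Polynomial.coeff_C_mul, coeff_C_mul]; exact htaylor k j)
    (fun j hj => by rw [hQ₁ j (by omega), hP'_lt j hj, mul_zero])
    (by rw [hQ₁ h (by omega), hP'_eq, inv_mul_cancel₀ hc])
    (by rw [Polynomial.eval_mul, Polynomial.eval_C, Polynomial.taylor_eval, ← hfg, hPf, mul_zero])
  rw [hfg]
  exact (hg.X_pow_mul ha _).add (.of_forall_mul_coeff_mem ha hs)

end PowerSeries

theorem exists_pos_nat_mul_mem_bot {s : Set ℚ} (hs : s.Finite) :
    ∃ b : ℕ, 0 < b ∧ ∀ q ∈ s, (b : ℚ) * q ∈ (⊥ : Subring ℚ) := by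
  refine ⟨∏ q ∈ hs.toFinset, q.den, Finset.prod_pos fun q _ => q.pos, fun q hq => ?_⟩
  obtain ⟨t, ht⟩ := Finset.dvd_prod_of_mem Rat.den (hs.mem_toFinset.mpr hq)
  refine Subring.mem_bot.mpr ⟨t * q.num, ?_⟩
  rw [ht, Int.cast_mul, Int.cast_natCast, ← Rat.mul_den_eq_num, Nat.cast_mul]
  ring

/-- **Eisenstein's Theorem, coefficient form.** If `f = Σ fₗ xˡ ∈ ℚ⟦x⟧` is algebraic over
`ℚ[x]`, then there is a positive integer `a` such that `a^(ℓ+1)·fₗ ∈ ℤ` for all `ℓ`. -/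
theorem eisenstein_thm_coeff
    (f : PowerSeries ℚ)
    (halg : ∃ P : Polynomial (Polynomial ℚ), P ≠ 0 ∧
      Polynomial.eval f (P.map (Polynomial.coeToPowerSeries.algHom ℚ).toRingHom) = 0) :
    ∃ a : ℕ, 0 < a ∧ ∀ ℓ : ℕ, ∃ m : ℤ,
      (a : ℚ) ^ (ℓ + 1) * PowerSeries.coeff ℓ f = (m : ℚ) := by
  set φ : ℚ[X] →+* ℚ⟦X⟧ := (Polynomial.coeToPowerSeries.algHom ℚ).toRingHom
  have hφ : ∀ p : ℚ[X], φ p = p := fun p => by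
    simp [φ, Polynomial.coeToPowerSeries.algHom_apply]
  obtain ⟨P₀, hP₀, hP₀f⟩ := halg
  rw [Polynomial.eval_map] at hP₀f
  obtain ⟨P, hPf, hP'f⟩ := Polynomial.exists_eval₂_eq_zero_and_eval₂_derivative_ne_zero
    (fun p q hpq => Polynomial.coe_injective ℚ (by rwa [hφ, hφ] at hpq)) hP₀ hP₀f
  rw [← Polynomial.eval_map] at hPf
  rw [← Polynomial.eval_map, ← Polynomial.derivative_map] at hP'f
  obtain ⟨h, hh⟩ := ENat.ne_top_iff_exists.mp (order_eq_top.not.mpr hP'f)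
  obtain ⟨hc, hP'_lt⟩ := order_eq_nat.mp hh.symm
  set c := coeff h ((Polynomial.derivative (P.map φ)).eval f)
  set s := trunc (h + 2) f
  obtain ⟨a, ha, hden⟩ := exists_pos_nat_mul_mem_bot (s.finite_range_coeff.union
    (((Polynomial.taylor s P).finite_range_coeff.biUnion fun p _ => p.finite_range_coeff).image
      (c⁻¹ * ·)))
  have hf : IsEisensteinConstant ⊥ (a : ℚ) f := .of_eval_eq_zero (natCast_mem _ a) hc
    (eq_X_pow_mul_shift_add_trunc (h + 2) f) hPf hP'_lt rfl
    (fun j => by rw [Polynomial.coeff_coe]; exact hden _ (Or.inl ⟨j, rfl⟩))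
    (fun k j => by
      rw [← hφ, ← Polynomial.map_taylor, Polynomial.coeff_map, hφ, Polynomial.coeff_coe]
      exact hden _ (Or.inr ⟨_, Set.mem_biUnion ⟨k, rfl⟩ ⟨j, rfl⟩, rfl⟩))
  exact ⟨a, ha, fun ℓ => (Subring.mem_bot.mp (hf ℓ)).imp fun _ => Eq.symm⟩
end

section
/- If f ∈ ℚ⟦x⟧ is D-finite, then the sequence of its coefficients (fₗ) is P-recursive: there exist polynomials p₀,…,p_e ∈ ℤ[t], with p_e nonzero, such that p₀(ℓ)fₗ + p₁(ℓ)f_{ℓ+1} + ⋯ + p_e(ℓ)f_{ℓ+e} = 0 for all ℓ ∈ ℕ. -/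
/-!
Let `D` bound the degrees of the `aᵢ`. The coefficient of `x ^ (ℓ + D)` in `∑ aᵢ f⁽ⁱ⁾` is
`∑_{k ≤ d + D} q_k(ℓ) f_{ℓ+k}` with
`q_k(t) = ∑_{i + j = k} a_{i, D - j} (t + k)(t + k - 1)⋯(t + k - i + 1)`,
so the coefficients satisfy this recurrence. If `i₀` is the largest index with `a_{i₀} ≠ 0`, the
coefficient of `t ^ i₀` in `q_k` is `a_{i₀, D + i₀ - k}`, so some `q_k` is nonzero. Truncating at
the last nonzero `q_k` and clearing denominators gives the integer recurrence.
-/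

open Polynomial Finset

theorem PowerSeries.coeff_add_mul_coe_of_natDegree_le {R : Type*} [CommSemiring R]
    {p : R[X]} {D : ℕ} (hp : p.natDegree ≤ D) (g : PowerSeries R) (ℓ : ℕ) :
    PowerSeries.coeff (ℓ + D) ((p : PowerSeries R) * g) =
      ∑ j ∈ range (D + 1), p.coeff (D - j) * PowerSeries.coeff (ℓ + j) g := by
  rw [PowerSeries.coeff_mul, Nat.sum_antidiagonal_eq_sum_range_succ
    (fun m n => PowerSeries.coeff m (p : PowerSeries R) * PowerSeries.coeff n g),
    ← sum_subset (range_subset_range.2 (by omega : D + 1 ≤ ℓ + D + 1))]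
  · rw [← sum_range_reflect]
    refine sum_congr rfl fun j hj => ?_
    rw [mem_range] at hj
    rw [Polynomial.coeff_coe, show ℓ + D - (D + 1 - 1 - j) = ℓ + j by omega, Nat.add_sub_cancel]
  · intro m _ hm
    rw [mem_range, not_lt] at hm
    rw [Polynomial.coeff_coe, coeff_eq_zero_of_natDegree_lt (by omega), zero_mul]

section Recurrence

variable {R : Type*} [CommRing R]

noncomputable def recurrenceCoeff (a : ℕ → R[X]) (d D k : ℕ) : R[X] :=
  ∑ x ∈ range (d + 1) ×ˢ range (D + 1) with x.1 + x.2 = k,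
    C ((a x.1).coeff (D - x.2)) * (descPochhammer R x.1).comp (X + C (k : R))

theorem coeff_add_sum_coe_mul_iterate_derivative (a : ℕ → R[X]) {d D : ℕ}
    (hD : ∀ i ≤ d, (a i).natDegree ≤ D) (f : PowerSeries R) (ℓ : ℕ) :
    PowerSeries.coeff (ℓ + D)
        (∑ i ∈ range (d + 1), (a i : PowerSeries R) * (PowerSeries.derivative R)^[i] f) =
      ∑ k ∈ range (d + D + 1),
        (recurrenceCoeff a d D k).eval (ℓ : R) * PowerSeries.coeff (ℓ + k) f := by
  let term : ℕ × ℕ → R := fun x => (a x.1).coeff (D - x.2) *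
    ((ℓ + x.1 + x.2).descFactorial x.1 * PowerSeries.coeff (ℓ + x.1 + x.2) f)
  have hmaps : ∀ x ∈ range (d + 1) ×ˢ range (D + 1), x.1 + x.2 ∈ range (d + D + 1) := by
    intro x hx
    simp only [mem_product, mem_range] at hx ⊢
    omega
  calc _ = ∑ i ∈ range (d + 1), ∑ j ∈ range (D + 1), term (i, j) := by
        rw [map_sum]
        refine sum_congr rfl fun i hi => ?_
        rw [PowerSeries.coeff_add_mul_coe_of_natDegree_le
          (hD i (Nat.lt_succ_iff.1 (mem_range.1 hi)))]
        refine sum_congr rfl fun j _ => ?_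
        rw [PowerSeries.coeff_iterate_derivative, ← Nat.add_descFactorial_eq_ascFactorial]
        simp only [term, add_right_comm ℓ i j]
    _ = ∑ k ∈ range (d + D + 1), ∑ x ∈ range (d + 1) ×ˢ range (D + 1) with x.1 + x.2 = k,
          term x := by rw [sum_fiberwise_of_maps_to hmaps, sum_product]
    _ = _ := by
        refine sum_congr rfl fun k _ => ?_
        rw [recurrenceCoeff, eval_finsetSum, sum_mul]
        refine sum_congr rfl fun x hx => ?_
        rw [(mem_filter.1 hx).2.symm]
        simp only [term, eval_mul, eval_C, eval_comp, eval_add, eval_X]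
        rw [← Nat.cast_add, descPochhammer_eval_eq_descFactorial, ← add_assoc, mul_assoc]

theorem natDegree_descPochhammer_comp_X_add_C [IsDomain R] (n : ℕ) (r : R) :
    ((descPochhammer R n).comp (X + C r)).natDegree = n := by
  rw [natDegree_comp, descPochhammer_natDegree, natDegree_X_add_C, mul_one]

theorem coeff_recurrenceCoeff_of_forall_lt_eq_zero [IsDomain R] {a : ℕ → R[X]} {d D i₀ k : ℕ}
    (hi₀ : i₀ ≤ d) (hmax : ∀ i, i₀ < i → i ≤ d → a i = 0) (hk : i₀ ≤ k) (hkD : k ≤ i₀ + D) :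
    (recurrenceCoeff a d D k).coeff i₀ = (a i₀).coeff (D - (k - i₀)) := by
  rw [recurrenceCoeff, finsetSum_coeff, sum_eq_single (i₀, k - i₀)]
  · have hlead : ((descPochhammer R i₀).comp (X + C (k : R))).coeff i₀ = 1 := by
      simpa only [natDegree_descPochhammer_comp_X_add_C] using
        ((monic_descPochhammer R i₀).comp_X_add_C (k : R)).coeff_natDegree
    rw [coeff_C_mul, hlead, mul_one]
  · rintro ⟨i, j⟩ hx hne
    simp only [mem_filter, mem_product, mem_range] at hx
    dsimp only
    rcases lt_or_gt_of_ne (show i ≠ i₀ by rintro rfl; exact hne (Prod.ext rfl (by dsimp; omega)))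
      with hlt | hgt
    · rw [coeff_C_mul, coeff_eq_zero_of_natDegree_lt (p := (descPochhammer R i).comp (X + C _))
        (by rwa [natDegree_descPochhammer_comp_X_add_C]), mul_zero]
    · rw [hmax i hgt (by omega), coeff_zero, C_0, zero_mul, coeff_zero]
  · intro hnot
    exact absurd (by simp only [mem_filter, mem_product, mem_range]; omega) hnot

theorem exists_recurrenceCoeff_ne_zero [IsDomain R] {a : ℕ → R[X]} {d D : ℕ}
    (ha : ∃ i ≤ d, a i ≠ 0) (hD : ∀ i ≤ d, (a i).natDegree ≤ D) :
    ∃ k ≤ d + D, recurrenceCoeff a d D k ≠ 0 := by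
  classical
  obtain ⟨i, hid, hai⟩ := ha
  set i₀ := Nat.findGreatest (fun i => a i ≠ 0) d
  have hi₀ : a i₀ ≠ 0 := Nat.findGreatest_spec (P := fun i => a i ≠ 0) hid hai
  have hi₀d : i₀ ≤ d := Nat.findGreatest_le d
  have hmax : ∀ i, i₀ < i → i ≤ d → a i = 0 := fun i hlt hle =>
    not_not.1 (Nat.findGreatest_is_greatest hlt hle)
  have hdeg := hD i₀ hi₀d
  refine ⟨i₀ + (D - (a i₀).natDegree), by omega, fun hzero => ?_⟩
  have hcoeff := coeff_recurrenceCoeff_of_forall_lt_eq_zero hi₀d hmax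
    (D := D) (k := i₀ + (D - (a i₀).natDegree)) (by omega) (by omega)
  rw [hzero, coeff_zero, show D - (i₀ + (D - (a i₀).natDegree) - i₀) = (a i₀).natDegree by omega]
    at hcoeff
  exact leadingCoeff_ne_zero.2 hi₀ hcoeff.symm

end Recurrence

theorem exists_nonzero_leading_recurrence {K : Type*} [CommSemiring K] {q : ℕ → K[X]}
    {u : ℕ → K} {E k : ℕ} (hkE : k ≤ E) (hk : q k ≠ 0)
    (h : ∀ ℓ : ℕ, ∑ i ∈ range (E + 1), (q i).eval (ℓ : K) * u (ℓ + i) = 0) :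
    ∃ e, q e ≠ 0 ∧ ∀ ℓ : ℕ, ∑ i ∈ range (e + 1), (q i).eval (ℓ : K) * u (ℓ + i) = 0 := by
  classical
  set e := Nat.findGreatest (fun i => q i ≠ 0) E
  have heE : e ≤ E := Nat.findGreatest_le E
  refine ⟨e, Nat.findGreatest_spec (P := fun i => q i ≠ 0) hkE hk, fun ℓ => ?_⟩
  rw [← h ℓ]
  refine sum_subset (range_subset_range.2 (by omega)) fun i hi hie => ?_
  simp only [mem_range] at hi hie
  have hqi : q i = 0 :=
    not_not.1 (Nat.findGreatest_is_greatest (P := fun i => q i ≠ 0) (n := E) (by omega) (by omega))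
  rw [hqi, eval_zero, zero_mul]

theorem Polynomial.exist_integer_multiples {R S ι : Type*} [CommRing R] [CommRing S] [Algebra R S]
    (M : Submonoid R) [IsLocalization M S] (s : Finset ι) (q : ι → S[X]) :
    ∃ b : M, ∃ p : ι → R[X], ∀ i ∈ s, (p i).map (algebraMap R S) = (b : R) • q i := by
  let := Polynomial.algebra R S
  have := Polynomial.isLocalization M S
  obtain ⟨⟨_, b, hb, rfl⟩, hmul⟩ := IsLocalization.exist_integer_multiples (M.map C) s q
  choose! p hp using hmul
  refine ⟨⟨b, hb⟩, p, fun i hi => ?_⟩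
  rw [← coe_mapRingHom, ← Polynomial.algebraMap_def, hp i hi, Algebra.smul_def, Algebra.smul_def]
  simp [Polynomial.algebraMap_def]

theorem exists_int_recurrence_of_rat {q : ℕ → ℚ[X]} {u : ℕ → ℚ} {e : ℕ} (he : q e ≠ 0)
    (h : ∀ ℓ : ℕ, ∑ i ∈ range (e + 1), (q i).eval (ℓ : ℚ) * u (ℓ + i) = 0) :
    ∃ p : ℕ → ℤ[X], p e ≠ 0 ∧
      ∀ ℓ : ℕ, ∑ i ∈ range (e + 1), (((p i).eval (ℓ : ℤ) : ℤ) : ℚ) * u (ℓ + i) = 0 := by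
  obtain ⟨⟨b, hb_mem⟩, p, hp⟩ :=
    Polynomial.exist_integer_multiples (nonZeroDivisors ℤ) (range (e + 1)) q
  have hb : (b : ℚ) ≠ 0 := Int.cast_ne_zero.2 (nonZeroDivisors.ne_zero hb_mem)
  have hmap : ∀ i ∈ range (e + 1), (p i).map (Int.castRingHom ℚ) = C (b : ℚ) * q i := by
    intro i hi
    rw [← algebraMap_int_eq, hp i hi, ← smul_eq_C_mul, Int.cast_smul_eq_zsmul]
  refine ⟨p, fun hpe => ?_, fun ℓ => ?_⟩
  · refine mul_ne_zero (C_ne_zero.2 hb) he ?_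
    rw [← hmap e (self_mem_range_succ e), hpe, Polynomial.map_zero]
  · have heval : ∀ i ∈ range (e + 1), (((p i).eval (ℓ : ℤ) : ℤ) : ℚ) = b * (q i).eval (ℓ : ℚ) := by
      intro i hi
      rw [← eq_intCast (Int.castRingHom ℚ), ← eval_natCast_map, hmap i hi, eval_mul, eval_C]
    rw [sum_congr rfl fun i hi => by rw [heval i hi, mul_assoc], ← mul_sum, h ℓ, mul_zero]

/-- **D-finite implies P-recursive.** If `f ∈ ℚ⟦x⟧` is D-finite, then its coefficient
sequence satisfies a recurrence `p₀(ℓ)fₗ + p₁(ℓ)f_{ℓ+1} + ⋯ + p_e(ℓ)f_{ℓ+e} = 0` for all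
`ℓ ∈ ℕ`, with `p₀,…,p_e ∈ ℤ[t]` and `p_e ≠ 0`. -/
theorem dfinite_implies_precursive
    (f : PowerSeries ℚ)
    (hDfin : ∃ d : ℕ, ∃ a : ℕ → Polynomial ℚ, (∃ i ≤ d, a i ≠ 0) ∧
      ∑ i ∈ Finset.range (d + 1),
        (Polynomial.coeToPowerSeries.algHom ℚ (a i)) * (PowerSeries.derivativeFun)^[i] f = 0) :
    ∃ e : ℕ, ∃ p : ℕ → Polynomial ℤ, p e ≠ 0 ∧ ∀ ℓ : ℕ,
      ∑ i ∈ Finset.range (e + 1),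
        (((p i).eval (ℓ : ℤ) : ℤ) : ℚ) * PowerSeries.coeff (ℓ + i) f = 0 := by
  obtain ⟨d, a, ha, hode⟩ := hDfin
  set D := (range (d + 1)).sup fun i => (a i).natDegree
  have hD : ∀ i ≤ d, (a i).natDegree ≤ D := fun i hi =>
    le_sup (f := fun i => (a i).natDegree) (mem_range.2 (Nat.lt_succ_of_le hi))
  have hode' :
      ∑ i ∈ range (d + 1), (a i : PowerSeries ℚ) * (PowerSeries.derivative ℚ)^[i] f = 0 := by
    simp only [coeToPowerSeries.algHom_apply, Algebra.algebraMap_self, PowerSeries.map_id] at hode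
    exact hode
  obtain ⟨k, hk, hqk⟩ := exists_recurrenceCoeff_ne_zero ha hD
  obtain ⟨e, he, hrec⟩ := exists_nonzero_leading_recurrence (u := fun n => PowerSeries.coeff n f)
    hk hqk fun ℓ => by rw [← coeff_add_sum_coe_mul_iterate_derivative a hD, hode', map_zero]
  exact ⟨e, exists_int_recurrence_of_rat (u := fun n => PowerSeries.coeff n f) he hrec⟩
end

section
/- Every algebraic power series f ∈ ℚ⟦x⟧ (in one indeterminate) is D-finite: the ℚ(x)-vector space spanned by the derivatives f, f', f'', … is finite-dimensional. -/
/-!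
Over `F = ℚ(x)` an algebraic `f` generates a finite extension `F(f)` inside the Laurent series
field `ℚ((x))`, to which `d/dx` extends. In characteristic zero the derivation of `F` extends
uniquely to the finite extension `F(f)`, so `F(f)` is stable under `d/dx` and contains every
derivative of `f`. Infinitely many vectors of the finite-dimensional `F`-space `F(f)` are linearly
dependent, and clearing denominators turns the coefficients of a dependence into polynomials.
-/

open Polynomial PowerSeries
open scoped Differential LaurentSeries RatFunc

theorem exists_sum_range_eq_zero_of_not_linearIndependent {R M : Type*} [Ring R]
    [AddCommGroup M] [Module R M] {v : ℕ → M} (h : ¬ LinearIndependent R v) :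
    ∃ n, ∃ a : ℕ → R, (∃ i ≤ n, a i ≠ 0) ∧ ∑ i ∈ Finset.range (n + 1), a i • v i = 0 := by
  classical
  obtain ⟨s, g, hg, i, his, hgi⟩ := not_linearIndependent_iff.mp h
  have hs : s ⊆ Finset.range (s.sup id + 1) := fun j hj =>
    Finset.mem_range_succ_iff.mpr (Finset.le_sup (f := id) hj)
  refine ⟨s.sup id, fun j => if j ∈ s then g j else 0,
    ⟨i, Finset.le_sup (f := id) his, by simpa [his] using hgi⟩, ?_⟩
  simp only [ite_smul, zero_smul, Finset.sum_ite_mem, Finset.inter_eq_right.mpr hs, hg]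

@[reducible]
def Differential.ofDerivation {R A : Type*} [CommRing R] [CommRing A] [Algebra R A]
    (d : Derivation R A A) : Differential A :=
  ⟨d.restrictScalars ℤ⟩

namespace Differential

variable {A K : Type*} [CommRing A] [Differential A] [Field K] [Algebra A K] [IsFractionRing A K]

/- `a ↦ a + a′ ε` is a ring map into the dual numbers over `K`; it extends to `K` by the universal
property of localization, and the `ε`-component of the extension is the extended derivation. -/
variable (K) in
def toTrivSqZeroExt : A →+* TrivSqZeroExt K K where
  toFun a := .inl (algebraMap A K a) + .inr (algebraMap A K a′)
  map_one' := by ext <;> simp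
  map_mul' a b := by
    ext <;> simp [Derivation.leibniz, add_comm, mul_comm, -DualNumber.inr_eq_smul_eps]
  map_zero' := by ext <;> simp
  map_add' a b := by ext <;> simp [-DualNumber.inr_eq_smul_eps]

variable (A K) in
noncomputable def liftTrivSqZeroExt : K →+* TrivSqZeroExt K K :=
  IsLocalization.lift (M := nonZeroDivisors A) (g := toTrivSqZeroExt K) fun s =>
    TrivSqZeroExt.isUnit_iff_isUnit_fst.mpr <| by
      simpa [toTrivSqZeroExt] using IsLocalization.map_units K s

theorem fst_liftTrivSqZeroExt (x : K) : (liftTrivSqZeroExt A K x).fst = x := by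
  have : (TrivSqZeroExt.fstHom K K K).toRingHom.comp (liftTrivSqZeroExt A K) = RingHom.id K :=
    IsLocalization.ringHom_ext (nonZeroDivisors A) <| RingHom.ext fun a => by
      simp [liftTrivSqZeroExt, toTrivSqZeroExt]
  exact RingHom.congr_fun this x

variable (A K) in
@[reducible]
noncomputable def ofIsFractionRing : Differential K :=
  ⟨Derivation.mk' (AddMonoidHom.mk' (fun x => (liftTrivSqZeroExt A K x).snd) fun x y => by
      simp).toIntLinearMap fun x y => by
    simp [TrivSqZeroExt.snd_mul, fst_liftTrivSqZeroExt, add_comm, mul_comm]⟩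

theorem differentialAlgebra_ofIsFractionRing :
    letI := ofIsFractionRing A K
    DifferentialAlgebra A K :=
  letI := ofIsFractionRing A K
  ⟨fun a => by
    change (liftTrivSqZeroExt A K (algebraMap A K a)).snd = _
    simp [liftTrivSqZeroExt, toTrivSqZeroExt, -DualNumber.inr_eq_smul_eps]⟩

end Differential

namespace DifferentialAlgebra

theorem trans {A B C : Type*} [CommRing A] [CommRing B] [CommRing C] [Differential A]
    [Differential B] [Differential C] [Algebra A B] [Algebra B C] [Algebra A C]
    [IsScalarTower A B C] [DifferentialAlgebra A B] [DifferentialAlgebra B C] :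
    DifferentialAlgebra A C where
  deriv_algebraMap a := by
    rw [IsScalarTower.algebraMap_apply A B C, deriv_algebraMap, deriv_algebraMap,
      ← IsScalarTower.algebraMap_apply]

theorem of_isFractionRing {A F K : Type*} [CommRing A] [Field F] [Field K] [Differential A]
    [Differential F] [Differential K] [Algebra A F] [IsFractionRing A F] [Algebra A K]
    [Algebra F K] [IsScalarTower A F K] [DifferentialAlgebra A F] [DifferentialAlgebra A K] :
    DifferentialAlgebra F K where
  deriv_algebraMap z := by
    obtain ⟨a, s, -, rfl⟩ := IsFractionRing.div_surjective A z
    simp only [map_div₀, Derivation.leibniz_div, deriv_algebraMap, map_sub, map_mul, map_pow,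
      map_inv₀, smul_eq_mul, ← IsScalarTower.algebraMap_apply]

theorem iterate_deriv_algebraMap {A B : Type*} [CommRing A] [CommRing B]
    [Differential A] [Differential B] [Algebra A B] [DifferentialAlgebra A B] (n : ℕ) (a : A) :
    (Differential.deriv (R := B))^[n] (algebraMap A B a) =
      algebraMap A B ((Differential.deriv (R := A))^[n] a) :=
  (Function.Semiconj.iterate_right (fun a => (deriv_algebraMap a).symm) n a).symm

end DifferentialAlgebra

section LaurentSeries

variable (k : Type*) [Field k]

noncomputable instance : Differential k[X] := .ofDerivation derivative'
noncomputable instance : Differential k⟦X⟧ := .ofDerivation (d⁄dX k)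
noncomputable instance : Differential (RatFunc k) := .ofIsFractionRing k[X] (RatFunc k)
noncomputable instance : Differential k⸨X⸩ := .ofIsFractionRing k⟦X⟧ k⸨X⸩

instance : DifferentialAlgebra k[X] (RatFunc k) := Differential.differentialAlgebra_ofIsFractionRing
instance : DifferentialAlgebra k⟦X⟧ k⸨X⸩ := Differential.differentialAlgebra_ofIsFractionRing

instance : DifferentialAlgebra k[X] k⟦X⟧ where
  deriv_algebraMap p := by
    change d⁄dX k _ = algebraMap _ _ (derivative p)
    simp [PowerSeries.algebraMap_apply', PowerSeries.derivative_coe]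

instance : IsScalarTower k[X] k⟦X⟧ k⸨X⸩ :=
  IsScalarTower.of_algebraMap_eq fun p => by
    simp [PowerSeries.algebraMap_apply', RatFunc.coe_coe]

instance : DifferentialAlgebra (RatFunc k) k⸨X⸩ :=
  haveI : DifferentialAlgebra k[X] k⸨X⸩ := .trans (B := k⟦X⟧)
  .of_isFractionRing (A := k[X])

end LaurentSeries

section

open IntermediateField

variable {F K : Type*} [Field F] [CharZero F] [Differential F] [Field K] [Differential K]
  [Algebra F K] [DifferentialAlgebra F K]

theorem IsIntegral.iterate_deriv_mem_adjoin {x : K} (hx : IsIntegral F x) (n : ℕ) :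
    (Differential.deriv (R := K))^[n] x ∈ F⟮x⟯ := by
  have := adjoin.finiteDimensional hx
  induction n with
  | zero => exact mem_adjoin_simple_self F x
  | succ n ih =>
    rw [Function.iterate_succ_apply']
    -- `F⟮x⟯` carries the unique derivation extending that of `F`, which is the restriction of `′`.
    change (algebraMap F⟮x⟯ K ⟨_, ih⟩)′ ∈ F⟮x⟯
    rw [deriv_algebraMap]
    exact SetLike.coe_mem _

theorem IsIntegral.not_linearIndependent_iterate_deriv {x : K} (hx : IsIntegral F x) :
    ¬ LinearIndependent F fun n => (Differential.deriv (R := K))^[n] x := by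
  have := adjoin.finiteDimensional hx
  intro h
  exact Module.Finite.not_linearIndependent_of_infinite (R := F) (M := F⟮x⟯)
    (fun n => ⟨_, hx.iterate_deriv_mem_adjoin n⟩) (.of_comp F⟮x⟯.val.toLinearMap h)

end

theorem PowerSeries.not_linearIndependent_iterate_derivative {k : Type*} [Field k] [CharZero k]
    {f : k⟦X⟧} (hf : IsAlgebraic k[X] f) :
    ¬ LinearIndependent k[X] fun n => (d⁄dX k)^[n] f := by
  let ι := IsScalarTower.toAlgHom k[X] k⟦X⟧ k⸨X⸩
  have hι : Function.Injective ι := HahnSeries.ofPowerSeries_injective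
  have hint : IsIntegral (RatFunc k) (ι f) :=
    ((hf.algHom ι).extendScalars (IsFractionRing.injective k[X] (RatFunc k))).isIntegral
  intro hli
  apply hint.not_linearIndependent_iterate_deriv
  rw [← LinearIndependent.iff_fractionRing k[X] (RatFunc k)]
  have hcomm : (fun n => (Differential.deriv (R := k⸨X⸩))^[n] (ι f)) =
      ι.toLinearMap ∘ fun n => (d⁄dX k)^[n] f :=
    funext fun n => DifferentialAlgebra.iterate_deriv_algebraMap n f
  rw [hcomm]
  exact hli.map' ι.toLinearMap (LinearMap.ker_eq_bot.mpr hι)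

/-- **Algebraic power series are D-finite.** If `f ∈ ℚ⟦x⟧` is algebraic over `ℚ[x]`, then
`f` satisfies a nontrivial linear differential equation with polynomial coefficients
(equivalently, the `ℚ(x)`-span of the derivatives of `f` is finite-dimensional). -/
theorem algebraic_implies_dfinite
    (f : PowerSeries ℚ)
    (halg : ∃ P : Polynomial (Polynomial ℚ), P ≠ 0 ∧
      Polynomial.eval f (P.map (Polynomial.coeToPowerSeries.algHom ℚ).toRingHom) = 0) :
    ∃ d : ℕ, ∃ a : ℕ → Polynomial ℚ, (∃ i ≤ d, a i ≠ 0) ∧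
      ∑ i ∈ Finset.range (d + 1),
        (Polynomial.coeToPowerSeries.algHom ℚ (a i)) * (PowerSeries.derivativeFun)^[i] f = 0 := by
  obtain ⟨P, hP, hPf⟩ := halg
  have hf : IsAlgebraic ℚ[X] f := ⟨P, hP, by rw [aeval_def, ← eval_map]; exact hPf⟩
  obtain ⟨n, a, ha, hsum⟩ :=
    exists_sum_range_eq_zero_of_not_linearIndependent (R := ℚ[X])
      (not_linearIndependent_iterate_derivative hf)
  refine ⟨n, a, ha, (Finset.sum_congr rfl fun i _ => ?_).trans hsum⟩
  rw [Algebra.smul_def]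
  rfl
end

section
/- The exponential series exp(x) = Σₗ xˡ/ℓ! ∈ ℚ⟦x⟧ is not algebraic over ℚ[x]. -/
/-!
Suppose `P(f) = 0` with `P = Σ pᵢ Yⁱ ≠ 0` of minimal degree `n` and leading coefficient `a`.
Differentiating, and using `f′ = f`, gives `Σ (pᵢ′ + i pᵢ) fⁱ = 0`; eliminating the `Yⁿ` term
between the two relations leaves a relation of smaller degree, which therefore vanishes
identically: `W(a, pᵢ) = (n - i) a pᵢ` for every `i`, with `W` the Wronskian. Since
`deg W(a, b) < deg a + deg b`, this forces `pᵢ = 0` for `i ≠ n`, so `a fⁿ = 0`, which is absurd.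
-/

open Polynomial Differential
open scoped PowerSeries

namespace Polynomial

variable {R : Type*} [CommRing R]

noncomputable instance instDifferential : Differential R[X] := ⟨derivative'.restrictScalars ℤ⟩

theorem deriv_eq_derivative (p : R[X]) : p′ = derivative p := rfl

theorem eq_zero_of_wronskian_eq_C_mul [IsDomain R] {a b : R[X]} {c : R} (ha : a ≠ 0)
    (hc : c ≠ 0) (h : wronskian a b = C c * (a * b)) : b = 0 := by
  by_contra hb
  have := degree_wronskian_lt_add ha hb
  rw [h, degree_C_mul hc, degree_mul] at this
  exact lt_irrefl _ this

end Polynomial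

namespace PowerSeries

variable {R : Type*} [CommRing R]

-- `Differential` is stated over `Ring.toIntAlgebra`, which is not defeq to the coefficientwise
-- `ℤ`-algebra structure that instance search finds on `R⟦X⟧`.
noncomputable instance instDifferential : Differential R⟦X⟧ :=
  ⟨@Derivation.mk' ℤ _ R⟦X⟧ _ (Ring.toIntAlgebra _) R⟦X⟧ _ _ _
    ((derivative R).toLinearMap.restrictScalars ℤ) (derivative R).leibniz⟩

theorem deriv_eq_derivative (f : R⟦X⟧) : f′ = d⁄dX R f := rfl

instance : DifferentialAlgebra R[X] R⟦X⟧ where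
  deriv_algebraMap p := by
    simp [algebraMap_apply', Polynomial.deriv_eq_derivative, deriv_eq_derivative, derivative_coe]

instance : FaithfulSMul R[X] R⟦X⟧ :=
  (faithfulSMul_iff_algebraMap_injective _ _).mpr (Polynomial.coe_injective R)

end PowerSeries

namespace Differential

variable {A : Type*} [CommRing A] [Differential A]

theorem coeff_implicitDeriv_X (p : A[X]) (i : ℕ) :
    (implicitDeriv X p).coeff i = (p.coeff i)′ + i * p.coeff i := by
  rcases i with _ | i
  · simp [implicitDeriv]
  · simp [implicitDeriv, coeff_X_mul, coeff_derivative, mul_comm]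

end Differential

section

variable {K R : Type*} [CommRing K] [IsDomain K] [CharZero K] [CommRing R] [IsDomain R]
  [Algebra K[X] R] [FaithfulSMul K[X] R] [Differential R] [DifferentialAlgebra K[X] R]

theorem transcendental_of_deriv_eq_self {f : R} (hf : f′ = f) (hf0 : f ≠ 0) :
    Transcendental K[X] f := by
  rintro ⟨P, hP0, hPf⟩
  induction hn : P.natDegree using Nat.strong_induction_on generalizing P with
  | _ n ih =>
  set a := P.leadingCoeff
  have ha : a ≠ 0 := leadingCoeff_ne_zero.mpr hP0
  set Q := C a * implicitDeriv X P - C (a′ + n * a) * P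
  have hQf : aeval f Q = 0 := by
    simp [Q, ← deriv_aeval_eq_implicitDeriv f X (by simpa using hf), hPf]
  have hQcoeff (i : ℕ) :
      Q.coeff i = wronskian a (P.coeff i) - C ((n : K) - i) * (a * P.coeff i) := by
    simp only [Q, coeff_sub, coeff_C_mul, coeff_implicitDeriv_X, wronskian,
      Polynomial.deriv_eq_derivative, C_sub, map_natCast]
    ring
  have hQ : Q = 0 := by
    by_contra hQ0
    refine ih Q.natDegree ?_ Q hQ0 hQf rfl
    by_contra! hle
    apply leadingCoeff_ne_zero.mpr hQ0
    rw [leadingCoeff, hQcoeff]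
    rcases hle.eq_or_lt with h | h
    · simp [← h, a, leadingCoeff, hn, wronskian_self_eq_zero]
    · simp [coeff_eq_zero_of_natDegree_lt (hn ▸ h), wronskian_zero_right]
  have hP : P = C a * X ^ n := by
    ext i
    by_cases hi : i = n
    · simp [hi, a, leadingCoeff, hn]
    · have hc : (n : K) - i ≠ 0 := sub_ne_zero.mpr (Nat.cast_injective.ne (Ne.symm hi))
      have := eq_zero_of_wronskian_eq_C_mul ha hc
        (by rw [← sub_eq_zero, ← hQcoeff, hQ, coeff_zero])
      simp [coeff_C_mul, coeff_X_pow, hi, this]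
  rw [hP] at hPf
  simp [map_eq_zero_iff _ (FaithfulSMul.algebraMap_injective K[X] R), ha, hf0] at hPf

end

/-- The exponential series `exp(x) = Σ xˡ/ℓ!` is not algebraic over `ℚ[x]`. -/
theorem exp_not_algebraic :
    ¬ ∃ P : Polynomial (Polynomial ℚ), P ≠ 0 ∧
      Polynomial.eval (PowerSeries.mk fun ℓ : ℕ => (1 : ℚ) / (Nat.factorial ℓ))
        (P.map (Polynomial.coeToPowerSeries.algHom ℚ).toRingHom) = 0 := by
  rintro ⟨P, hP0, hP⟩
  rw [eval_map] at hP
  exact transcendental_of_deriv_eq_self (PowerSeries.derivative_exp ℚ)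
    (PowerSeries.isUnit_exp ℚ).ne_zero ⟨P, hP0, hP⟩
end

section
/- Let A be an integral domain with fraction field K, and let f = Σ_{s∈ℝ₊} a_s x^s ∈ K⟦x^{ℝ₊}⟧ be algebraic and separable over A⟦x^{ℝ₊}⟧. Then there exists a nonzero a ∈ A such that a^{⌈s⌉+1}·a_s ∈ A for all s ∈ ℝ₊. -/
/-- A Hahn series belongs to `A⟦x^{ℝ₊}⟧` (inside `K⟦x^{ℝ₊}⟧ ⊆ HahnSeries ℝ K`): its
support is contained in `ℝ₊` and meets every bounded interval in a finite set, and all its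
coefficients come from `A`. -/
def IsGenPowerSeriesOver {A K : Type*} [CommRing A] [Field K] [Algebra A K]
    (f : HahnSeries ℝ K) : Prop :=
  (∀ s : ℝ, s < 0 → f.coeff s = 0) ∧
  (∀ r : ℝ, {s : ℝ | f.coeff s ≠ 0 ∧ s ≤ r}.Finite) ∧
  ∀ s : ℝ, ∃ c : A, algebraMap A K c = f.coeff s

/-!
Let `g = P'(f) ≠ 0` have order `v` and leading coefficient `c`, and let `F` be `f` truncated
below `s`. Comparing the coefficients of `x^(s+v)` in `P(F) = P(f) + g (F - f) + (F - f)² r`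
gives `c a_s = -[x^(s+v)] P(F)`, and `P(F)` only involves the `a_t` with `t < s`. Expanding
`P(F)` around the truncation `F₀` of `f` below `v + 1` then shows, by well-founded induction
on `s`, that `b ^ (⌊L (s - v - 1)⌋ + n + 1) a_s ∈ A`, where `b` clears the denominators of
`c⁻¹` and of the finitely many `a_t` with `t < v + 1`, `n = deg P`, and `L` is large compared
with `n` and with the inverse of the gap between `v` and the next exponent of `g`. That
exponent is at most `(L + n + 1) (⌈s⌉ + 1)`, so `a = b ^ (L + n + 1)` works.
-/

open Polynomial

namespace HahnSeries

section LinearOrder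

variable {Γ R : Type*} [LinearOrder Γ] [CommRing R]

theorem le_of_le_orderTop_of_coeff_ne_zero {x : HahnSeries Γ R} {a b : Γ}
    (ha : ↑a ≤ x.orderTop) (hb : x.coeff b ≠ 0) : a ≤ b :=
  WithTop.coe_le_coe.1 (ha.trans (orderTop_le_of_coeff_ne_zero hb))

theorem le_orderTop_truncLT_sub (x : HahnSeries Γ R) (c : Γ) :
    ↑c ≤ (truncLT c x - x).orderTop :=
  le_orderTop_iff_forall.2 fun g hg => by
    rw [coeff_sub, coeff_truncLT_of_lt (WithTop.coe_lt_coe.1 hg), sub_self]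

theorem coeff_truncLT_sub_truncLT (x : HahnSeries Γ R) {a b : Γ} (hab : a ≤ b) (t : Γ) :
    (truncLT b x - truncLT a x).coeff t = if a ≤ t ∧ t < b then x.coeff t else 0 := by
  simp only [coeff_sub, HahnSeries.coeff_truncLT]
  split_ifs <;> grind

end LinearOrder

variable {Γ R : Type*} [AddCommMonoid Γ] [CommRing R]

def nonnegSubring [LinearOrder Γ] [IsOrderedCancelAddMonoid Γ] : Subring (HahnSeries Γ R) where
  carrier := {x | 0 ≤ x.orderTop}
  zero_mem' := by simp
  one_mem' := le_orderTop_iff_forall.2 fun g hg => by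
    rw [coeff_one, if_neg (WithTop.coe_lt_coe.1 hg).ne]
  add_mem' {x y} hx hy :=
    show 0 ≤ (x + y).orderTop from (le_min hx hy).trans min_orderTop_le_orderTop_add
  neg_mem' {x} hx := show 0 ≤ (-x).orderTop by rwa [orderTop_neg]
  mul_mem' {x y} hx hy :=
    show 0 ≤ (x * y).orderTop from (add_nonneg hx hy).trans orderTop_add_le_mul

theorem mem_nonnegSubring [LinearOrder Γ] [IsOrderedCancelAddMonoid Γ] {x : HahnSeries Γ R} :
    x ∈ nonnegSubring ↔ 0 ≤ x.orderTop := by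
  rfl

def coeffSubring [PartialOrder Γ] [IsOrderedCancelAddMonoid Γ] (S : Subring R) :
    Subring (HahnSeries Γ R) where
  carrier := {x | ∀ g, x.coeff g ∈ S}
  zero_mem' _ := S.zero_mem
  one_mem' g := by
    rw [coeff_one]
    split_ifs
    exacts [S.one_mem, S.zero_mem]
  add_mem' hx hy g := S.add_mem (hx g) (hy g)
  neg_mem' hx g := S.neg_mem (hx g)
  mul_mem' hx hy g := by
    rw [coeff_mul]
    exact S.sum_mem fun ij _ => S.mul_mem (hx _) (hy _)

theorem mem_coeffSubring [PartialOrder Γ] [IsOrderedCancelAddMonoid Γ] {S : Subring R}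
    {x : HahnSeries Γ R} : x ∈ coeffSubring S ↔ ∀ g, x.coeff g ∈ S := by
  rfl

variable [LinearOrder Γ] [IsOrderedCancelAddMonoid Γ]

theorem coe_nsmul_le_orderTop_pow {x : HahnSeries Γ R} {a : Γ} (ha : ↑a ≤ x.orderTop)
    (n : ℕ) : ((n • a : Γ) : WithTop Γ) ≤ (x ^ n).orderTop := by
  rw [WithTop.coe_nsmul]
  exact (nsmul_le_nsmul_right ha n).trans orderTop_nsmul_le_orderTop_pow

theorem truncLT_mem_nonnegSubring {x : HahnSeries Γ R} (hx : x ∈ nonnegSubring) (c : Γ) :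
    truncLT c x ∈ nonnegSubring := by
  refine le_orderTop_iff_forall.2 fun g hg => ?_
  rw [HahnSeries.coeff_truncLT]
  split_ifs
  exacts [coeff_eq_zero_of_lt_orderTop (hg.trans_le hx), rfl]

theorem coeff_mul_add_of_le_orderTop {x y : HahnSeries Γ R} {a b : Γ} (ha : ↑a ≤ x.orderTop)
    (hb : ↑b ≤ y.orderTop) : (x * y).coeff (a + b) = x.coeff a * y.coeff b := by
  rw [coeff_mul]
  have hunique : ∀ ij ∈ Finset.antidiagonal x.isPWO_support y.isPWO_support (a + b),
      ij = (a, b) := by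
    intro ij hij
    obtain ⟨hi, hj, hsum⟩ := Finset.mem_antidiagonal.1 hij
    have h₂ : b ≤ ij.2 := le_of_le_orderTop_of_coeff_ne_zero hb hj
    have h₁ : ij.1 = a := (le_of_le_orderTop_of_coeff_ne_zero ha hi).antisymm'
      (le_of_add_le_add_right (hsum.trans_le (add_le_add_right h₂ a)))
    exact Prod.ext h₁ (by rw [h₁] at hsum; exact add_left_cancel hsum)
  refine Finset.sum_eq_single (a, b) (fun ij hij hne => absurd (hunique ij hij) hne) fun hab => ?_
  by_contra hne
  exact hab (Finset.mem_antidiagonal.2 ⟨left_ne_zero_of_mul hne, right_ne_zero_of_mul hne, rfl⟩)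

end HahnSeries

namespace Polynomial

variable {R : Type*} [CommRing R] {S : Subring R} {Q : R[X]}

theorem eval_mem_of_coeff_mem (hQ : ∀ i, Q.coeff i ∈ S) {x : R} (hx : x ∈ S) :
    Q.eval x ∈ S := by
  rw [eval_eq_sum_range]
  exact S.sum_mem fun i _ => S.mul_mem (hQ i) (S.pow_mem hx i)

theorem coeff_hasseDeriv_mem (hQ : ∀ i, Q.coeff i ∈ S) (k i : ℕ) :
    (hasseDeriv k Q).coeff i ∈ S := by
  rw [hasseDeriv_coeff]
  exact S.mul_mem (natCast_mem S _) (hQ _)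

theorem coeff_derivative_mem (hQ : ∀ i, Q.coeff i ∈ S) (i : ℕ) : (derivative Q).coeff i ∈ S :=
  hasseDeriv_one' Q ▸ coeff_hasseDeriv_mem hQ 1 i

theorem exists_mem_eval_add_eq (hQ : ∀ i, Q.coeff i ∈ S) {x h : R} (hx : x ∈ S) (hh : h ∈ S) :
    ∃ r ∈ S, Q.eval (x + h) = Q.eval x + (derivative Q).eval x * h + r * h ^ 2 := by
  set T := taylor x Q
  refine ⟨∑ i ∈ Finset.range Q.natDegree, T.coeff (i + 2) * h ^ i,
    S.sum_mem fun i _ => S.mul_mem ?_ (S.pow_mem hh i), ?_⟩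
  · rw [taylor_coeff]
    exact eval_mem_of_coeff_mem (coeff_hasseDeriv_mem hQ _) hx
  · rw [add_comm x, ← taylor_eval, eval_eq_sum_range' (n := Q.natDegree + 2)
      (by rw [natDegree_taylor]; omega), Finset.sum_range_succ', Finset.sum_range_succ',
      taylor_coeff_zero, taylor_coeff_one, Finset.sum_mul]
    simp only [pow_zero, mul_one, zero_add, pow_one]
    rw [Finset.sum_congr rfl fun i _ =>
      show T.coeff (i + 1 + 1) * h ^ (i + 1 + 1) = T.coeff (i + 2) * h ^ i * h ^ 2 by ring]
    ring

end Polynomial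

namespace HahnSeries

variable {Γ R : Type*} [AddCommMonoid Γ] [LinearOrder Γ] [IsOrderedCancelAddMonoid Γ]
  [CommRing R] {Q : (HahnSeries Γ R)[X]} {x h : HahnSeries Γ R}

theorem orderTop_le_orderTop_eval_add_sub (hQ : ∀ i, Q.coeff i ∈ nonnegSubring)
    (hx : x ∈ nonnegSubring) (hh : h ∈ nonnegSubring) :
    h.orderTop ≤ (Q.eval (x + h) - Q.eval x).orderTop := by
  obtain ⟨r, hr, hQr⟩ := exists_mem_eval_add_eq hQ hx hh
  have hq : (derivative Q).eval x + r * h ∈ nonnegSubring :=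
    add_mem (eval_mem_of_coeff_mem (coeff_derivative_mem hQ) hx) (mul_mem hr hh)
  calc h.orderTop = h.orderTop + 0 := (add_zero _).symm
    _ ≤ h.orderTop + ((derivative Q).eval x + r * h).orderTop := add_le_add le_rfl hq
    _ ≤ (h * ((derivative Q).eval x + r * h)).orderTop := orderTop_add_le_mul
    _ = (Q.eval (x + h) - Q.eval x).orderTop := by rw [hQr]; ring_nf

theorem coeff_eval_add_of_eval_eq_zero (hQ : ∀ i, Q.coeff i ∈ nonnegSubring)
    (hx : x ∈ nonnegSubring) (hh : h ∈ nonnegSubring) (hroot : Q.eval x = 0) {v s : Γ}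
    (hv : ↑v ≤ ((derivative Q).eval x).orderTop) (hs : ↑s ≤ h.orderTop) (hvs : v < s) :
    (Q.eval (x + h)).coeff (v + s) = ((derivative Q).eval x).coeff v * h.coeff s := by
  obtain ⟨r, hr, hQr⟩ := exists_mem_eval_add_eq hQ hx hh
  have hrest : ((v + s : Γ) : WithTop Γ) < (r * h ^ 2).orderTop :=
    calc ((v + s : Γ) : WithTop Γ) < ↑s + ↑s := by
          rw [← WithTop.coe_add, WithTop.coe_lt_coe]; exact add_lt_add_of_lt_of_le hvs le_rfl
      _ ≤ 0 + 2 • h.orderTop := by rw [zero_add, two_nsmul]; exact add_le_add hs hs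
      _ ≤ r.orderTop + (h ^ 2).orderTop := add_le_add hr orderTop_nsmul_le_orderTop_pow
      _ ≤ (r * h ^ 2).orderTop := orderTop_add_le_mul
  rw [hQr, hroot, zero_add, coeff_add, coeff_mul_add_of_le_orderTop hv hs,
    coeff_eq_zero_of_lt_orderTop hrest, add_zero]

end HahnSeries

section Floor

variable {α : Type*} [Semiring α] [LinearOrder α] [IsStrictOrderedRing α] [FloorSemiring α]
  {x y : α}

theorem Nat.floor_add_le_floor {k : ℕ} (hx : 0 ≤ x) (h : x + k ≤ y) : ⌊x⌋₊ + k ≤ ⌊y⌋₊ :=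
  Nat.floor_add_natCast hx k ▸ Nat.floor_mono h

theorem Nat.floor_add_floor_le_floor_add (hx : 0 ≤ x) (hy : 0 ≤ y) :
    ⌊x⌋₊ + ⌊y⌋₊ ≤ ⌊x + y⌋₊ :=
  Nat.floor_add_le_floor hx (add_le_add_right (Nat.floor_le hy) x)

end Floor

theorem Nat.floor_mul_sub_add_le {L m : ℕ} {s μ : ℝ} (hμ : 0 ≤ μ) :
    ⌊L * (s - μ)⌋₊ + m ≤ (L + m) * (⌈s⌉₊ + 1) := by
  have : ⌊L * (s - μ)⌋₊ ≤ L * ⌈s⌉₊ := Nat.floor_le_of_le <| by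
    push_cast
    nlinarith [Nat.le_ceil s, (Nat.cast_nonneg L : (0 : ℝ) ≤ L)]
  nlinarith

theorem Set.IsWF.exists_forall_lt_imp_add_le {s : Set ℝ} (hs : s.IsWF) (v : ℝ) :
    ∃ η, 0 < η ∧ η ≤ 1 ∧ ∀ a ∈ s, v < a → v + η ≤ a := by
  by_cases hT : {a ∈ s | v < a}.Nonempty
  · have hTwf : {a ∈ s | v < a}.IsWF := hs.mono fun a ha => ha.1
    have hmin := (hTwf.min_mem hT).2
    refine ⟨Min.min 1 (hTwf.min hT - v), lt_min one_pos (sub_pos.2 hmin), min_le_left _ _,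
      fun a ha hva => ?_⟩
    have := hTwf.min_le hT ⟨ha, hva⟩
    linarith [min_le_right 1 (hTwf.min hT - v)]
  · exact ⟨1, one_pos, le_rfl, fun a ha hva => absurd ⟨a, ha, hva⟩ hT⟩

theorem IsFractionRing.exists_ne_zero_forall_mul_mem_range (A : Type*) {K : Type*}
    [CommRing A] [Nontrivial A] [CommRing K] [Algebra A K] [IsFractionRing A K] {s : Set K}
    (hs : s.Finite) :
    ∃ b : A, b ≠ 0 ∧ ∀ x ∈ s, algebraMap A K b * x ∈ (algebraMap A K).range := by
  obtain ⟨b, hb⟩ :=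
    IsLocalization.exist_integer_multiples_of_finset (nonZeroDivisors A) hs.toFinset
  refine ⟨b, nonZeroDivisors.coe_ne_zero b, fun x hx => ?_⟩
  obtain ⟨c, hc⟩ := hb x (hs.mem_toFinset.2 hx)
  exact ⟨c, by rw [hc, Algebra.smul_def]⟩

open HahnSeries

section Denominators

variable {K : Type*} [CommRing K] {R : Subring K} {β : K}

theorem pow_mul_mem_of_le (hβ : β ∈ R) {x : K} {k l : ℕ} (hkl : k ≤ l) (hx : β ^ k * x ∈ R) :
    β ^ l * x ∈ R := by
  rw [← pow_sub_mul_pow β hkl, mul_assoc]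
  exact R.mul_mem (R.pow_mem hβ _) hx

namespace HahnSeries

variable {Γ : Type*} [AddCommMonoid Γ] [PartialOrder Γ] [IsOrderedCancelAddMonoid Γ]
  {x y : HahnSeries Γ K}

theorem pow_mul_coeff_mul_mem (hβ : β ∈ R) {w₁ w₂ : Γ → ℕ}
    (hx : ∀ a, β ^ w₁ a * x.coeff a ∈ R) (hy : ∀ b, β ^ w₂ b * y.coeff b ∈ R) {t : Γ} {k : ℕ}
    (hk : ∀ a b, a + b = t → x.coeff a ≠ 0 → y.coeff b ≠ 0 → w₁ a + w₂ b ≤ k) :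
    β ^ k * (x * y).coeff t ∈ R := by
  rw [coeff_mul, Finset.mul_sum]
  refine R.sum_mem fun ij hij => ?_
  obtain ⟨hi, hj, hsum⟩ := Finset.mem_antidiagonal.1 hij
  refine pow_mul_mem_of_le hβ (hk _ _ hsum hi hj) ?_
  convert R.mul_mem (hx ij.1) (hy ij.2) using 1
  ring

theorem pow_mul_coeff_pow_mem (hβ : β ∈ R) (hx : ∀ a, β * x.coeff a ∈ R) (n : ℕ) (t : Γ) :
    β ^ n * (x ^ n).coeff t ∈ R := by
  induction n generalizing t with
  | zero => simpa using (coeffSubring R).one_mem t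
  | succ n ih =>
    rw [pow_succ x]
    exact pow_mul_coeff_mul_mem hβ ih (w₂ := fun _ => 1) (by simpa using hx)
      fun _ _ _ _ _ => le_rfl

theorem pow_floor_mul_coeff_pow_mem (hβ : β ∈ R) {L m : ℕ} {μ : ℝ} {H : HahnSeries ℝ K}
    (hH : ∀ t, β ^ (⌊L * (t - μ)⌋₊ + m) * H.coeff t ∈ R) (hHμ : ↑μ ≤ H.orderTop) (j : ℕ)
    (t : ℝ) : β ^ (⌊L * (t - j * μ)⌋₊ + j * m) * (H ^ j).coeff t ∈ R := by
  induction j generalizing t with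
  | zero =>
    rw [pow_zero, coeff_one]
    split_ifs with ht
    · simp [ht, R.one_mem]
    · simp [R.zero_mem]
  | succ j ih =>
    rw [pow_succ]
    refine pow_mul_coeff_mul_mem hβ ih hH fun a b hab ha hb => ?_
    have ha' : j * μ ≤ a :=
      nsmul_eq_mul j μ ▸ le_of_le_orderTop_of_coeff_ne_zero (coe_nsmul_le_orderTop_pow hHμ j) ha
    have hb' : μ ≤ b := le_of_le_orderTop_of_coeff_ne_zero hHμ hb
    have hsum := Nat.floor_add_floor_le_floor_add (x := L * (a - j * μ)) (y := L * (b - μ))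
      (by positivity) (by positivity)
    rw [show (L : ℝ) * (a - j * μ) + L * (b - μ) = L * (t - ↑(j + 1) * μ) by
      push_cast; rw [← hab]; ring] at hsum
    rw [add_mul, one_mul]
    omega

end HahnSeries

theorem Polynomial.pow_mul_coeff_eval_mem {Γ : Type*} [AddCommMonoid Γ] [PartialOrder Γ]
    [IsOrderedCancelAddMonoid Γ] (hβ : β ∈ R) {Q : (HahnSeries Γ K)[X]}
    (hQ : ∀ i, Q.coeff i ∈ coeffSubring R) {x : HahnSeries Γ K}
    (hx : ∀ a, β * x.coeff a ∈ R) {n : ℕ} (hn : Q.natDegree ≤ n) (t : Γ) :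
    β ^ n * (Q.eval x).coeff t ∈ R := by
  rw [eval_eq_sum_range' (Nat.lt_succ_of_le hn), HahnSeries.coeff_sum, Finset.mul_sum]
  refine R.sum_mem fun i hi => pow_mul_coeff_mul_mem hβ (w₁ := 0) (w₂ := fun _ => i)
    (by simpa using mem_coeffSubring.1 (hQ i)) (pow_mul_coeff_pow_mem hβ hx i)
    fun _ _ _ _ _ => ?_
  simpa [Nat.lt_succ_iff] using hi

theorem pow_floor_mul_coeff_eval_add_mem (hβ : β ∈ R) {P : (HahnSeries ℝ K)[X]} {n L : ℕ}
    (hPS : ∀ i, P.coeff i ∈ nonnegSubring) (hPR : ∀ i, P.coeff i ∈ coeffSubring R)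
    (hn : P.natDegree ≤ n) {F₀ H : HahnSeries ℝ K} (hF₀S : F₀ ∈ nonnegSubring)
    (hF₀R : ∀ t, β * F₀.coeff t ∈ R) {μ s v η : ℝ}
    (hH : ∀ t, β ^ (⌊L * (t - μ)⌋₊ + (n + 1)) * H.coeff t ∈ R) (hHμ : ↑μ ≤ H.orderTop)
    (hHs : ∀ t, s ≤ t → H.coeff t = 0)
    (hgap : ∀ a < v + η, a ≠ v → ((derivative P).eval F₀).coeff a = 0)
    (hv : 0 ≤ v) (hμ : v + 1 ≤ μ) (hL : 2 * (n + 1) ≤ L) (hLη : (n + 1 : ℝ) ≤ L * η) :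
    β ^ (⌊L * (s - μ)⌋₊ + n) * (P.eval (F₀ + H)).coeff (s + v) ∈ R := by
  rw [add_comm F₀, ← taylor_eval, eval_eq_sum_range' (n := n + 1)
    (by rw [natDegree_taylor]; omega), HahnSeries.coeff_sum, Finset.mul_sum]
  refine R.sum_mem fun j _ => ?_
  have hTS : (taylor F₀ P).coeff j ∈ nonnegSubring := by
    rw [taylor_coeff]
    exact eval_mem_of_coeff_mem (coeff_hasseDeriv_mem hPS j) hF₀S
  have hTR (t : ℝ) : β ^ n * ((taylor F₀ P).coeff j).coeff t ∈ R := by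
    rw [taylor_coeff]
    exact pow_mul_coeff_eval_mem hβ (coeff_hasseDeriv_mem hPR j) hF₀R
      ((natDegree_hasseDeriv_le P j).trans (by omega)) t
  refine pow_mul_coeff_mul_mem hβ (w₁ := fun _ => n) hTR
    (pow_floor_mul_coeff_pow_mem hβ hH hHμ j) fun a b hab ha hb => ?_
  suffices ⌊L * (b - j * μ)⌋₊ + j * (n + 1) ≤ ⌊L * (s - μ)⌋₊ by omega
  have hL0 : (0 : ℝ) ≤ L := Nat.cast_nonneg L
  -- For `j = 1` the gap of `P'(F₀)` above `v` forces `b ≤ s - η`; for `j ≥ 2` the exponent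
  -- `b ≥ j μ` is large enough on its own.
  rcases j with _ | _ | j
  · have hb0 : b = 0 := by
      by_contra hb0
      exact hb (by rw [pow_zero, HahnSeries.coeff_one, if_neg hb0])
    simp [hb0]
  · rw [pow_one] at hb
    have hbs : b < s := lt_of_not_ge fun h => hb (hHs b h)
    have hbμ : μ ≤ b := le_of_le_orderTop_of_coeff_ne_zero hHμ hb
    have ha : v + η ≤ a := by
      by_contra! h
      exact ha (by rw [taylor_coeff_one]; exact hgap a h (by linarith))
    refine Nat.floor_add_le_floor (by push_cast; nlinarith) ?_
    have : (L : ℝ) * η ≤ L * (s - b) := mul_le_mul_of_nonneg_left (by linarith) hL0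
    push_cast
    nlinarith
  · have hbj : (j + 2) * μ ≤ b := by
      have := le_of_le_orderTop_of_coeff_ne_zero (coe_nsmul_le_orderTop_pow hHμ (j + 2)) hb
      rwa [nsmul_eq_mul, Nat.cast_add, Nat.cast_two] at this
    have ha0 : 0 ≤ a := le_of_le_orderTop_of_coeff_ne_zero (by exact_mod_cast hTS) ha
    refine Nat.floor_add_le_floor (by push_cast; nlinarith) ?_
    have hj : (0 : ℝ) ≤ j := Nat.cast_nonneg j
    have h₁ : (j + 1 : ℝ) ≤ s - b + (j + 1) * μ := by nlinarith
    have h₂ : (L : ℝ) * (j + 1) ≤ L * (s - b + (j + 1) * μ) := mul_le_mul_of_nonneg_left h₁ hL0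
    have h₃ : (2 * (n + 1) : ℝ) ≤ L := by exact_mod_cast hL
    push_cast
    nlinarith

end Denominators

theorem pow_floor_mul_coeff_mem_of_eval_eq_zero {K : Type*} [Field K] {R : Subring K} {β : K}
    (hβ : β ∈ R) {P : (HahnSeries ℝ K)[X]} {n L : ℕ} (hPS : ∀ i, P.coeff i ∈ nonnegSubring)
    (hPR : ∀ i, P.coeff i ∈ coeffSubring R) (hn : P.natDegree ≤ n) {f : HahnSeries ℝ K}
    (hfS : f ∈ nonnegSubring) (hroot : P.eval f = 0) {v η : ℝ}
    (hv : ((derivative P).eval f).orderTop = v)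
    (hgap : ∀ a ∈ ((derivative P).eval f).support, v < a → v + η ≤ a) (hη : η ≤ 1)
    (hβc : β * (((derivative P).eval f).coeff v)⁻¹ ∈ R)
    (hinit : ∀ t < v + 1, β * f.coeff t ∈ R) (hL : 2 * (n + 1) ≤ L)
    (hLη : (n + 1 : ℝ) ≤ L * η) (s : ℝ) :
    β ^ (⌊L * (s - (v + 1))⌋₊ + (n + 1)) * f.coeff s ∈ R := by
  set μ := v + 1
  have hv0 : 0 ≤ v := by
    have : (derivative P).eval f ∈ nonnegSubring :=
      eval_mem_of_coeff_mem (coeff_derivative_mem hPS) hfS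
    rwa [mem_nonnegSubring, hv, WithTop.coe_nonneg] at this
  set F₀ := truncLT μ f
  have hF₀S : F₀ ∈ nonnegSubring := truncLT_mem_nonnegSubring hfS μ
  have hF₀R (t : ℝ) : β * F₀.coeff t ∈ R := by
    rw [HahnSeries.coeff_truncLT]
    split_ifs with ht
    exacts [hinit t ht, by simp [R.zero_mem]]
  have hgap₀ : ∀ a < v + η, a ≠ v → ((derivative P).eval F₀).coeff a = 0 := by
    intro a ha hav
    have hclose := orderTop_le_orderTop_eval_add_sub (coeff_derivative_mem hPS) hfS
      (sub_mem hF₀S hfS)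
    rw [add_sub_cancel] at hclose
    have hagree := coeff_eq_zero_of_lt_orderTop
      ((WithTop.coe_lt_coe.2 (by linarith : a < μ)).trans_le
        ((le_orderTop_truncLT_sub f μ).trans hclose))
    rw [HahnSeries.coeff_sub, sub_eq_zero] at hagree
    rw [hagree]
    rcases hav.lt_or_gt with h | h
    · exact coeff_eq_zero_of_lt_orderTop (hv ▸ WithTop.coe_lt_coe.2 h)
    · by_contra hne
      exact absurd (hgap a hne h) (not_le.2 ha)
  by_cases hs : s ∈ f.support
  swap
  · rw [(mem_support f s).not_left.1 hs, mul_zero]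
    exact R.zero_mem
  refine Set.WellFoundedOn.induction f.isWF_support hs
    (P := fun s => β ^ (⌊L * (s - μ)⌋₊ + (n + 1)) * f.coeff s ∈ R) fun s hs ih => ?_
  rcases lt_or_ge s μ with hsμ | hsμ
  · exact pow_mul_mem_of_le hβ (k := 1) (by omega) (by simpa using hinit s hsμ)
  set H := truncLT s f - F₀
  have hH (t : ℝ) : β ^ (⌊L * (t - μ)⌋₊ + (n + 1)) * H.coeff t ∈ R := by
    rw [coeff_truncLT_sub_truncLT f hsμ]
    split_ifs with ht
    · by_cases hft : f.coeff t = 0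
      · simp [hft, R.zero_mem]
      · exact ih t hft ht.2
    · simp [R.zero_mem]
  have hHμ : ↑μ ≤ H.orderTop := le_orderTop_iff_forall.2 fun t ht => by
    rw [coeff_truncLT_sub_truncLT f hsμ, if_neg fun h => (WithTop.coe_lt_coe.1 ht).not_ge h.1]
  have hHs (t : ℝ) (ht : s ≤ t) : H.coeff t = 0 := by
    rw [coeff_truncLT_sub_truncLT f hsμ, if_neg fun h => ht.not_gt h.2]
  have hbound := pow_floor_mul_coeff_eval_add_mem hβ hPS hPR hn hF₀S hF₀R hH hHμ hHs hgap₀ hv0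
    le_rfl hL hLη
  have hcoeff := coeff_eval_add_of_eval_eq_zero hPS hfS
    (sub_mem (truncLT_mem_nonnegSubring hfS s) hfS) hroot hv.ge (le_orderTop_truncLT_sub f s)
    (by linarith : v < s)
  rw [add_sub_cancel, HahnSeries.coeff_sub, coeff_truncLT_of_le le_rfl, zero_sub, mul_neg]
    at hcoeff
  have hc : ((derivative P).eval f).coeff v ≠ 0 := coeff_orderTop_ne hv
  have hfs : f.coeff s =
      -(((derivative P).eval f).coeff v)⁻¹ * (P.eval (F₀ + H)).coeff (s + v) := by
    rw [add_sub_cancel, add_comm s, hcoeff]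
    field_simp
  rw [hfs, show ⌊L * (s - μ)⌋₊ + (n + 1) = 1 + (⌊L * (s - μ)⌋₊ + n) by ring, _root_.pow_add]
  convert R.neg_mem (R.mul_mem hβc hbound) using 1
  ring

theorem eisenstein_generalized_general
    {A K : Type*} [CommRing A] [IsDomain A] [Field K] [Algebra A K] [IsFractionRing A K]
    (f : HahnSeries ℝ K)
    (hf₀ : ∀ s : ℝ, s < 0 → f.coeff s = 0)
    (hf₁ : ∀ r : ℝ, {s : ℝ | f.coeff s ≠ 0 ∧ s ≤ r}.Finite)
    (P : Polynomial (HahnSeries ℝ K))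
    (hPcoeff : ∀ i : ℕ, IsGenPowerSeriesOver (A := A) (P.coeff i))
    (hroot : Polynomial.eval f P = 0)
    (hsep : Polynomial.eval f (Polynomial.derivative P) ≠ 0) :
    ∃ a : A, a ≠ 0 ∧ ∀ s : ℝ, 0 ≤ s → ∃ c : A,
      algebraMap A K c = algebraMap A K a ^ (⌈s⌉₊ + 1) * f.coeff s := by
  have hfS : f ∈ nonnegSubring :=
    le_orderTop_iff_forall.2 fun s hs => hf₀ s (by exact_mod_cast hs)
  have hPS (i : ℕ) : P.coeff i ∈ nonnegSubring :=
    le_orderTop_iff_forall.2 fun s hs => (hPcoeff i).1 s (by exact_mod_cast hs)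
  have hPR (i : ℕ) : P.coeff i ∈ coeffSubring (algebraMap A K).range := (hPcoeff i).2.2
  set g := (derivative P).eval f
  set v := g.order
  have hv : g.orderTop = v := (order_eq_orderTop_of_ne_zero hsep).symm
  have hv0 : 0 ≤ v := zero_le_orderTop_iff.1 (eval_mem_of_coeff_mem (coeff_derivative_mem hPS) hfS)
  obtain ⟨η, hη0, hη1, hgap⟩ := g.isWF_support.exists_forall_lt_imp_add_le v
  obtain ⟨b, hb0, hb⟩ := IsFractionRing.exists_ne_zero_forall_mul_mem_range A
    (((hf₁ (v + 1)).image f.coeff).insert (g.coeff v)⁻¹)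
  have hinit (t : ℝ) (ht : t < v + 1) : algebraMap A K b * f.coeff t ∈ (algebraMap A K).range := by
    by_cases hft : f.coeff t = 0
    · simp [hft]
    · exact hb _ (Set.mem_insert_of_mem _ ⟨t, ⟨hft, ht.le⟩, rfl⟩)
  obtain ⟨L, hLdiv⟩ := exists_nat_ge (2 * (P.natDegree + 1) / η)
  have hLη : (2 * (P.natDegree + 1) : ℝ) ≤ L * η := (div_le_iff₀ hη0).1 hLdiv
  have hL : 2 * (P.natDegree + 1) ≤ L := by
    exact_mod_cast hLη.trans (mul_le_of_le_one_right (Nat.cast_nonneg L) hη1)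
  refine ⟨b ^ (L + (P.natDegree + 1)), pow_ne_zero _ hb0, fun s _ => ?_⟩
  have hclaim := pow_floor_mul_coeff_mem_of_eval_eq_zero (RingHom.mem_range_self _ b) hPS hPR
    le_rfl hfS hroot hv hgap hη1 (hb _ (Set.mem_insert _ _)) hinit hL (by linarith) s
  obtain ⟨c, hc⟩ := pow_mul_mem_of_le (RingHom.mem_range_self _ b)
    (Nat.floor_mul_sub_add_le (by linarith : 0 ≤ v + 1)) hclaim
  exact ⟨c, by rw [hc, map_pow, ← pow_mul]⟩

/-- **Eisenstein's Theorem for generalized power series.** Let `A` be an integral domain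
with fraction field `K`, and let `f = Σ_{s∈ℝ₊} a_s x^s ∈ K⟦x^{ℝ₊}⟧` be algebraic and
separable over `A⟦x^{ℝ₊}⟧`. Then there is a nonzero `a ∈ A` with `a^(⌈s⌉+1)·a_s ∈ A` for
all `s ∈ ℝ₊`. -/
theorem eisenstein_generalized
    {A K : Type*} [CommRing A] [IsDomain A] [Field K] [Algebra A K] [IsFractionRing A K]
    (f : HahnSeries ℝ K)
    (hf₀ : ∀ s : ℝ, s < 0 → f.coeff s = 0)
    (hf₁ : ∀ r : ℝ, {s : ℝ | f.coeff s ≠ 0 ∧ s ≤ r}.Finite)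
    (P : Polynomial (HahnSeries ℝ K)) (hP : P ≠ 0)
    (hPcoeff : ∀ i : ℕ, IsGenPowerSeriesOver (A := A) (P.coeff i))
    (hroot : Polynomial.eval f P = 0)
    (hsep : Polynomial.eval f (Polynomial.derivative P) ≠ 0) :
    ∃ a : A, a ≠ 0 ∧ ∀ s : ℝ, 0 ≤ s → ∃ c : A,
      algebraMap A K c = algebraMap A K a ^ (⌈s⌉₊ + 1) * f.coeff s :=
  eisenstein_generalized_general f hf₀ hf₁ P hPcoeff hroot hsep
end

section
/- Let ω₁,…,ωₙ be positive real numbers that are linearly independent over ℚ. The map φ : K⟦x₁,…,xₙ⟧ → K⟦t^{ℝ₊}⟧ defined by φ(Σ_α a_α x^α) = Σ_α a_α t^{⟨α,ω⟩} is an injective ring homomorphism, where ⟨α,ω⟩ = α₁ω₁ + ⋯ + αₙωₙ. -/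
/-!
Send `x^α` to `t^⟨α,ω⟩`. Since `α ↦ ⟨α,ω⟩` is additive, this is a ring homomorphism as soon as
it is well defined and the weight map is injective, which is where the `ℚ`-linear independence
of the `ωᵢ` enters. Well-definedness asks that the set of weights of a support be well-ordered in `ℝ`.
For `ωᵢ ≥ 0` the weight map is monotone, and every set of exponents is partially well-ordered
(Dickson's lemma), so even the set of all weights is well-ordered.
-/

open Finset

namespace Finsupp

variable {σ M : Type*}

theorem weight_injective_of_linearIndependent {R : Type*} [Semiring R] [CharZero R]
    [AddCommMonoid M] [Module R M] {w : σ → M} (hw : LinearIndependent R w) :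
    Function.Injective (weight w : (σ →₀ ℕ) → M) := by
  have hcast : ∀ α : σ →₀ ℕ,
      weight w α = linearCombination R w (α.mapRange (Nat.cast : ℕ → R) Nat.cast_zero) := by
    intro α
    rw [weight_apply, linearCombination_apply, sum_mapRange_index fun i => zero_smul R (w i)]
    simp only [Nat.cast_smul_eq_nsmul]
  intro α β hαβ
  rw [hcast, hcast] at hαβ
  exact mapRange_injective _ _ Nat.cast_injective (hw hαβ)

theorem weight_mono [AddCommMonoid M] [PartialOrder M] [IsOrderedAddMonoid M] {w : σ → M}
    (hw : ∀ i, 0 ≤ w i) : Monotone (weight w : (σ →₀ ℕ) → M) := by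
  intro α β hαβ
  obtain ⟨γ, rfl⟩ := exists_add_of_le hαβ
  rw [map_add]
  exact le_add_of_nonneg_right (Finset.sum_nonneg fun i _ => nsmul_nonneg (hw i) _)

theorem isPWO_range_weight [Finite σ] [AddCommMonoid M] [PartialOrder M]
    [IsOrderedAddMonoid M] {w : σ → M} (hw : ∀ i, 0 ≤ w i) :
    (Set.range (weight w : (σ →₀ ℕ) → M)).IsPWO := by
  rw [← Set.image_univ]
  exact (Set.isPWO_of_wellQuasiOrderedLE _).image_of_monotone (weight_mono hw)

end Finsupp

namespace HahnSeries

variable {Γ Γ' R : Type*}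

section extendDomain

variable [PartialOrder Γ] [PartialOrder Γ'] {f : Γ → Γ'} {hf : (Set.range f).IsPWO}

/-- Unlike `HahnSeries.embDomain`, `f` need not be monotone: only its range has to be
partially well-ordered. -/
noncomputable def extendDomain [Zero R] (f : Γ → Γ') (hf : (Set.range f).IsPWO) (x : R⟦Γ⟧) :
    R⟦Γ'⟧ where
  coeff := Function.extend f x.coeff 0
  isPWO_support' := hf.mono fun b hb => by
    by_contra hbf
    exact hb (Function.extend_apply' _ _ _ fun ⟨a, ha⟩ => hbf ⟨a, ha⟩)

theorem coeff_extendDomain_of_notMem_range [Zero R] {x : R⟦Γ⟧} {b : Γ'}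
    (hb : b ∉ Set.range f) : (extendDomain f hf x).coeff b = 0 :=
  Function.extend_apply' _ _ _ fun ⟨a, ha⟩ => hb ⟨a, ha⟩

theorem coeff_extendDomain [Zero R] (hinj : Function.Injective f) (x : R⟦Γ⟧) (a : Γ) :
    (extendDomain f hf x).coeff (f a) = x.coeff a :=
  hinj.extend_apply _ _ _

theorem support_extendDomain [Zero R] (hinj : Function.Injective f) (x : R⟦Γ⟧) :
    (extendDomain f hf x).support = f '' x.support := by
  ext b
  by_cases hb : b ∈ Set.range f
  · obtain ⟨a, rfl⟩ := hb
    simp [coeff_extendDomain hinj, hinj.mem_set_image]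
  · simp only [mem_support, coeff_extendDomain_of_notMem_range hb, ne_eq, not_true_eq_false,
      false_iff]
    exact fun ⟨a, _, ha⟩ => hb ⟨a, ha⟩

theorem extendDomain_injective [Zero R] (hinj : Function.Injective f) :
    Function.Injective (extendDomain f hf : R⟦Γ⟧ → R⟦Γ'⟧) := fun x y hxy => by
  ext a
  rw [← coeff_extendDomain (hf := hf) hinj, hxy, coeff_extendDomain hinj]

theorem extendDomain_zero [Zero R] : extendDomain f hf (0 : R⟦Γ⟧) = 0 := by
  ext b
  exact congrFun (Function.extend_zero f) b

theorem extendDomain_single [Zero R] (hinj : Function.Injective f) (a : Γ) (r : R) :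
    extendDomain f hf (single a r) = single (f a) r := by
  classical
  ext b
  by_cases hb : b ∈ Set.range f
  · obtain ⟨c, rfl⟩ := hb
    simp [coeff_extendDomain hinj, coeff_single, hinj.eq_iff]
  · rw [coeff_extendDomain_of_notMem_range hb, coeff_single_of_ne fun h => hb ⟨a, h.symm⟩]

theorem extendDomain_add [AddMonoid R] (x y : R⟦Γ⟧) :
    extendDomain f hf (x + y) = extendDomain f hf x + extendDomain f hf y := by
  ext b
  simpa [extendDomain] using congrFun (Function.extend_add f x.coeff y.coeff 0 0) b

end extendDomain

variable [AddCommMonoid Γ] [PartialOrder Γ] [IsOrderedCancelAddMonoid Γ]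
  [AddCommMonoid Γ'] [PartialOrder Γ'] [IsOrderedCancelAddMonoid Γ']

theorem antidiagonal_extendDomain [Zero R] (f : Γ →+ Γ') (hinj : Function.Injective f)
    {hf : (Set.range f).IsPWO} (x y : R⟦Γ⟧) (c : Γ) :
    Finset.antidiagonal (extendDomain f hf x).isPWO_support (extendDomain f hf y).isPWO_support
      (f c) = (Finset.antidiagonal x.isPWO_support y.isPWO_support c).map
          ((⟨f, hinj⟩ : Γ ↪ Γ').prodMap ⟨f, hinj⟩) := by
  ext ⟨u, v⟩
  simp only [Finset.mem_antidiagonal, support_extendDomain hinj, mem_map, Prod.exists,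
    Function.Embedding.coe_prodMap, Function.Embedding.coeFn_mk, Prod.map, Prod.mk.injEq]
  constructor
  · rintro ⟨⟨a, ha, rfl⟩, ⟨b, hb, rfl⟩, hab⟩
    exact ⟨a, b, ⟨ha, hb, hinj (by rw [map_add, hab])⟩, rfl, rfl⟩
  · rintro ⟨a, b, ⟨ha, hb, rfl⟩, rfl, rfl⟩
    exact ⟨⟨a, ha, rfl⟩, ⟨b, hb, rfl⟩, (map_add f a b).symm⟩

theorem extendDomain_mul [NonUnitalNonAssocSemiring R] (f : Γ →+ Γ')
    (hinj : Function.Injective f) {hf : (Set.range f).IsPWO} (x y : R⟦Γ⟧) :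
    extendDomain f hf (x * y) = extendDomain f hf x * extendDomain f hf y := by
  ext b
  by_cases hb : b ∈ Set.range f
  · obtain ⟨c, rfl⟩ := hb
    rw [coeff_extendDomain hinj, coeff_mul, coeff_mul, antidiagonal_extendDomain f hinj,
      sum_map]
    simp only [Function.Embedding.coe_prodMap, Function.Embedding.coeFn_mk, Prod.map,
      coeff_extendDomain hinj]
  · rw [coeff_extendDomain_of_notMem_range hb, coeff_mul, eq_comm]
    refine sum_eq_zero fun ⟨u, v⟩ huv => ?_
    rw [Finset.mem_antidiagonal, support_extendDomain hinj, support_extendDomain hinj] at huv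
    obtain ⟨⟨a, -, rfl⟩, ⟨b, -, rfl⟩, rfl⟩ := huv
    exact absurd ⟨a + b, map_add f a b⟩ hb

noncomputable def extendDomainRingHom [NonAssocSemiring R] (f : Γ →+ Γ')
    (hinj : Function.Injective f) (hf : (Set.range f).IsPWO) : R⟦Γ⟧ →+* R⟦Γ'⟧ where
  toFun := extendDomain f hf
  map_one' := by rw [← single_zero_one, extendDomain_single hinj, map_zero, single_zero_one]
  map_mul' := extendDomain_mul f hinj
  map_zero' := extendDomain_zero
  map_add' := extendDomain_add

end HahnSeries

/-- Let `ω₁,…,ωₙ` be positive reals, linearly independent over `ℚ`. The map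
`φ(Σ_α a_α x^α) = Σ_α a_α t^⟨α,ω⟩` is an injective ring homomorphism from
`K⟦x₁,…,xₙ⟧` to the ring of generalized power series `K⟦t^{ℝ₊}⟧` (Hahn series over `ℝ`). -/
theorem exists_injective_ringHom_mvPowerSeries_to_hahnSeries
    (K : Type*) [Field K] (n : ℕ) (ω : Fin n → ℝ)
    (hpos : ∀ i, 0 < ω i) (hind : LinearIndependent ℚ ω) :
    ∃ φ : MvPowerSeries (Fin n) K →+* HahnSeries ℝ K,
      Function.Injective φ ∧
      (∀ (f : MvPowerSeries (Fin n) K) (α : Fin n →₀ ℕ),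
        (φ f).coeff (∑ i, (α i : ℝ) * ω i) = MvPowerSeries.coeff α f) ∧
      (∀ (f : MvPowerSeries (Fin n) K) (s : ℝ),
        (∀ α : Fin n →₀ ℕ, s ≠ ∑ i, (α i : ℝ) * ω i) → (φ f).coeff s = 0) := by
  have hinj := Finsupp.weight_injective_of_linearIndependent hind
  have hpwo := Finsupp.isPWO_range_weight (M := ℝ) fun i => (hpos i).le
  have hweight (α : Fin n →₀ ℕ) : ∑ i, (α i : ℝ) * ω i = Finsupp.weight ω α := by
    simp only [Finsupp.weight_eq_sum, nsmul_eq_mul]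
  refine ⟨(HahnSeries.extendDomainRingHom (Finsupp.weight ω) hinj hpwo).comp
    HahnSeries.toMvPowerSeries.symm.toRingHom, ?_, fun f α => ?_, fun f s hs => ?_⟩
  · exact (HahnSeries.extendDomain_injective (hf := hpwo) hinj).comp
      HahnSeries.toMvPowerSeries.symm.injective
  · rw [hweight]
    exact HahnSeries.coeff_extendDomain (hf := hpwo) hinj _ α
  · exact HahnSeries.coeff_extendDomain_of_notMem_range (hf := hpwo) fun ⟨α, hα⟩ =>
      hs α (hα ▸ hweight α).symm
end

section
/- For n ≥ 2, the field ℂ((x₁,…,xₙ)) of fractions of ℂ⟦x₁,…,xₙ⟧ is not complete with respect to the (x)-adic norm |f/g| = e^{−(ord f − ord g)}; concretely, the sequence of partial sums of Σ_{ℓ≥1} x₁^{ℓ!}/x₂^{ℓ} is Cauchy but has no limit in ℂ((x₁,x₂)). -/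
/-!
Cauchyness: the difference of the `m`-th and `m'`-th partial sums is `Σ_{m<ℓ≤m'} x₁^{ℓ!}/x₂^ℓ`,
of order at least `min_ℓ (ℓ! − ℓ)`, and `ℓ! − ℓ → ∞`.

No limit: suppose `f/g` were one and let `x₁^a x₂^b` be a monomial of `g` whose `x₂`-degree `b` is
minimal. For `ℓ > a, b` and `m ≥ ℓ`, the coefficient of `x₁^{a+ℓ!} x₂^{b+m−ℓ}` in
`f x₂^m − g S_m` (where `S_m / x₂^m` is the `m`-th partial sum) is `−coeff_{a,b} g ≠ 0`,
so `ord(f/g − S_m/x₂^m)` stays bounded as `m → ∞`.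
-/

open MvPowerSeries Finsupp
open scoped Nat

lemma Nat.factorial_add_self_le_factorial_succ (n : ℕ) : n ! + n ≤ (n + 1)! := by
  rw [Nat.factorial_succ, Nat.add_mul, one_mul, add_comm]
  exact Nat.add_le_add_right (Nat.le_mul_of_pos_right n n.factorial_pos) _

lemma MvPowerSeries.exists_coeff_ne_zero_and_minimal_apply {σ R : Type*} [Semiring R]
    {g : MvPowerSeries σ R} (hg : g ≠ 0) (i : σ) :
    ∃ d, coeff d g ≠ 0 ∧ ∀ d' : σ →₀ ℕ, d' i < d i → coeff d' g = 0 := by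
  obtain ⟨d₀, hd₀⟩ := (ne_zero_iff_exists_coeff_ne_zero g).mp hg
  obtain ⟨d, hd, hmin⟩ := (measure fun d : σ →₀ ℕ => d i).wf.has_min {d | coeff d g ≠ 0} ⟨d₀, hd₀⟩
  exact ⟨d, hd, fun d' hlt => not_not.mp fun hd' => hmin d' hd' hlt⟩

noncomputable def monExp (p q : ℕ) : Fin 2 →₀ ℕ := single 0 p + single 1 q

@[simp] lemma monExp_apply_zero (p q : ℕ) : monExp p q 0 = p := by simp [monExp]

@[simp] lemma monExp_apply_one (p q : ℕ) : monExp p q 1 = q := by simp [monExp]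

@[simp] lemma degree_monExp (p q : ℕ) : degree (monExp p q) = p + q := by
  simp [monExp, degree_single]

variable {R : Type*} [CommRing R]

lemma X_zero_pow_mul_X_one_pow (p q : ℕ) :
    (X 0 : MvPowerSeries (Fin 2) R) ^ p * X 1 ^ q = monomial (monExp p q) 1 := by
  rw [X_pow_eq, X_pow_eq, monomial_mul_monomial, one_mul, monExp]

variable (R) in
noncomputable def partialSumNum (m : ℕ) : MvPowerSeries (Fin 2) R :=
  ∑ ℓ ∈ Finset.Icc 1 m, (X 0) ^ ℓ ! * (X 1) ^ (m - ℓ)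

lemma partialSumNum_mul_X_one_pow (m k : ℕ) :
    partialSumNum R m * X 1 ^ k = ∑ ℓ ∈ Finset.Ioc 0 m, monomial (monExp ℓ ! (m + k - ℓ)) 1 := by
  rw [partialSumNum, Finset.sum_mul, ← Finset.Icc_add_one_left_eq_Ioc, zero_add]
  refine Finset.sum_congr rfl fun ℓ hℓ => ?_
  have hℓm := (Finset.mem_Icc.mp hℓ).2
  rw [mul_assoc, ← pow_add, X_zero_pow_mul_X_one_pow, show m - ℓ + k = m + k - ℓ by omega]

lemma partialSumNum_mul_X_one_pow_sub {m m' : ℕ} (h : m ≤ m') :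
    partialSumNum R m' * X 1 ^ m - partialSumNum R m * X 1 ^ m' =
      ∑ ℓ ∈ Finset.Ioc m m', monomial (monExp ℓ ! (m + m' - ℓ)) 1 := by
  rw [partialSumNum_mul_X_one_pow, partialSumNum_mul_X_one_pow, add_comm m' m,
    ← Finset.sum_Ioc_consecutive _ m.zero_le h, add_sub_cancel_left]

lemma le_order_partialSumNum_mul_X_one_pow_sub {N m m' : ℕ} (hm : N + 2 ≤ m) (h : m ≤ m') :
    ((m + m' + N : ℕ) : ℕ∞) ≤
      order (partialSumNum R m' * X 1 ^ m - partialSumNum R m * X 1 ^ m') := by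
  rw [partialSumNum_mul_X_one_pow_sub h]
  refine le_order fun d hd => ?_
  rw [map_sum]
  refine Finset.sum_eq_zero fun ℓ hℓ => coeff_monomial_ne ?_ _
  rintro rfl
  obtain ⟨hmℓ, hℓm'⟩ := Finset.mem_Ioc.mp hℓ
  have hfac : ℓ + N ≤ ℓ ! := by
    obtain ⟨k, rfl⟩ : ∃ k, ℓ = k + 1 := ⟨ℓ - 1, by omega⟩
    have := Nat.factorial_add_self_le_factorial_succ k
    have := Nat.self_le_factorial k
    omega
  rw [degree_monExp] at hd
  norm_cast at hd
  omega

lemma coeff_mul_X_one_pow_eq_zero (f : MvPowerSeries (Fin 2) R) {d : Fin 2 →₀ ℕ} {m : ℕ}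
    (h : d 1 < m) : coeff d (f * X 1 ^ m) = 0 := by
  rw [X_pow_eq, coeff_mul_monomial, if_neg]
  exact fun hle => (le_def.mp hle 1).not_gt (by simpa using h)

/-- Terms with `ℓ' < ℓ` meet coefficients of `g` below the minimal `x₂`-degree, and those with
`ℓ' > ℓ` overshoot in `x₁`, because `ℓ'! ≥ ℓ! + ℓ > ℓ! + d 0`. -/
lemma coeff_mul_partialSumNum {g : MvPowerSeries (Fin 2) R} {d : Fin 2 →₀ ℕ}
    (hmin : ∀ d' : Fin 2 →₀ ℕ, d' 1 < d 1 → coeff d' g = 0) {ℓ m : ℕ} (hdℓ : d 0 < ℓ)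
    (hℓm : ℓ ≤ m) : coeff (d + monExp ℓ ! (m - ℓ)) (g * partialSumNum R m) = coeff d g := by
  have hsum := partialSumNum_mul_X_one_pow (R := R) m 0
  rw [pow_zero, mul_one, add_zero] at hsum
  rw [hsum, Finset.mul_sum, map_sum,
    Finset.sum_eq_single_of_mem ℓ (Finset.mem_Ioc.mpr ⟨by omega, hℓm⟩)]
  · rw [coeff_mul_monomial, if_pos le_add_self, add_tsub_cancel_right, mul_one]
  intro ℓ' _ hne
  rw [coeff_mul_monomial]
  split_ifs with hle
  · obtain ⟨h0, h1⟩ : ℓ' ! ≤ d 0 + ℓ ! ∧ m - ℓ' ≤ d 1 + (m - ℓ) := by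
      simpa using And.intro (le_def.mp hle 0) (le_def.mp hle 1)
    have hlt : ℓ' < ℓ := by
      refine lt_of_le_of_ne (not_lt.mp fun hgt => ?_) hne
      have : (ℓ + 1)! ≤ ℓ' ! := Nat.factorial_le hgt
      have := Nat.factorial_add_self_le_factorial_succ ℓ
      omega
    rw [mul_one]
    exact hmin _ (by simp; omega)
  · rfl

lemma exists_order_sub_mul_partialSumNum_le (f : MvPowerSeries (Fin 2) R)
    {g : MvPowerSeries (Fin 2) R} (hg : g ≠ 0) :
    ∃ ℓ K : ℕ, ∀ m, ℓ ≤ m → order (f * X 1 ^ m - g * partialSumNum R m) ≤ (m + K : ℕ) := by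
  obtain ⟨d, hd, hmin⟩ := exists_coeff_ne_zero_and_minimal_apply hg 1
  set ℓ := degree d + 1
  refine ⟨ℓ, degree d + ℓ !, fun m hm => ?_⟩
  have hdeg : degree d = d 0 + d 1 := by rw [degree_eq_sum, Fin.sum_univ_two]
  have hcoeff : coeff (d + monExp ℓ ! (m - ℓ)) (f * X 1 ^ m - g * partialSumNum R m) ≠ 0 := by
    rw [map_sub, coeff_mul_X_one_pow_eq_zero f (by simp; omega),
      coeff_mul_partialSumNum hmin (by omega) hm, zero_sub, neg_ne_zero]
    exact hd
  refine (order_le hcoeff).trans ?_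
  rw [map_add, degree_monExp]
  exact_mod_cast (by omega)

open MvPowerSeries in
/-- **`ℂ((x₁,x₂))` is not complete for the `(x)`-adic norm.** The partial sums of
`Σ_{ℓ≥1} x₁^{ℓ!}/x₂^ℓ` form a Cauchy sequence with no limit in `ℂ((x₁,x₂))`.  Writing the
`m`-th partial sum as `S m / x₂^m` with `S m = Σ_{ℓ=1}^m x₁^{ℓ!} x₂^{m−ℓ} ∈ ℂ⟦x₁,x₂⟧`,
Cauchyness says `ord(S m' · x₂^m − S m · x₂^m') − (m + m') → ∞`, and a limit `f/g`
(`g ≠ 0`) would satisfy `ord(f·x₂^m − g·S m) − ord g − m → ∞`; the latter is impossible. -/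
theorem field_of_power_series_not_complete
    (S : ℕ → MvPowerSeries (Fin 2) ℂ)
    (hS : ∀ m, S m = ∑ ℓ ∈ Finset.Icc 1 m,
      (MvPowerSeries.X 0) ^ (Nat.factorial ℓ) * (MvPowerSeries.X 1) ^ (m - ℓ)) :
    (∀ N : ℕ, ∃ M : ℕ, ∀ m m' : ℕ, M ≤ m → m ≤ m' →
      ((m + m' + N : ℕ) : ℕ∞) ≤
        MvPowerSeries.order (S m' * (MvPowerSeries.X 1) ^ m - S m * (MvPowerSeries.X 1) ^ m')) ∧
    ¬ ∃ f g : MvPowerSeries (Fin 2) ℂ, g ≠ 0 ∧ ∀ N : ℕ, ∃ M : ℕ, ∀ m : ℕ, M ≤ m →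
      MvPowerSeries.order g + ((m + N : ℕ) : ℕ∞) ≤
        MvPowerSeries.order (f * (MvPowerSeries.X 1) ^ m - g * S m) := by
  obtain rfl : S = partialSumNum ℂ := funext hS
  refine ⟨fun N => ⟨N + 2, fun m m' => le_order_partialSumNum_mul_X_one_pow_sub⟩, ?_⟩
  rintro ⟨f, g, hg, hlim⟩
  obtain ⟨ℓ, K, hK⟩ := exists_order_sub_mul_partialSumNum_le f hg
  obtain ⟨M, hM⟩ := hlim (K + 1)
  have h := (le_add_self.trans (hM (max M ℓ) le_sup_left)).trans (hK _ le_sup_right)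
  norm_cast at h
  omega
end
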